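/- arXiv:2001.03029 — 10 statements merged into one kernel-verified Lean document; each statement's English description precedes it below -/
import Mathlib

section
/- Let $f_1, f_2:\mathbb{R}\to\mathbb{R}$ be continuous functions with $f_1(y) < f_2(y)$ for all $y\in\mathbb{R}$, let $\alpha_1,\alpha_2:[0,\infty)\to\mathbb{R}$ be continuous with $\alpha_1(t)\le\alpha_2(t)$ for all $t\ge 0$, let $g:[0,\infty)\to\mathbb{R}$ be continuous, and let $Y_0\in\mathbb{R}$. If $Y_1,Y_2:[0,\infty)\to\mathbb{R}$ are continuous functions satisfying $Y_i(t) = Y_0 + \int_0^t f_i(Y_i(s))\,ds + \int_0^t \alpha_i(s)\,ds + g(t)$ for all $t\ge 0$ and $i=1,2$, then $Y_1(t) < Y_2(t)$ for all $t > 0$. -/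
open MeasureTheory Set

/-! The difference `Y₂ - Y₁ = ∫₀ᵗ (f₂ ∘ Y₂ - f₁ ∘ Y₁ + α₂ - α₁)` no longer involves the rough
path `g`, so it is a `C¹` function vanishing at `0` whose derivative is positive at each of its
zeros. Such a function stays nonnegative by the fencing theorem, and it cannot return to `0` at
some `t > 0`, since that would be a local minimum with positive derivative. -/

theorem nonneg_of_deriv_pos_at_zeros {F F' : ℝ → ℝ} {a : ℝ}
    (hF : ∀ t, a ≤ t → HasDerivAt F (F' t) t) (ha : 0 ≤ F a)
    (hpos : ∀ t, a ≤ t → F t = 0 → 0 < F' t) {t : ℝ} (ht : a ≤ t) : 0 ≤ F t :=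
  image_le_of_deriv_right_lt_deriv_boundary' (f := fun _ => 0) (f' := fun _ => 0)
    continuousOn_const (fun _ _ => hasDerivWithinAt_const _ _ _) ha
    (fun s hs => (hF s hs.1).continuousAt.continuousWithinAt)
    (fun s hs => (hF s hs.1).hasDerivWithinAt)
    (fun s hs hs0 => hpos s hs.1 hs0.symm) ⟨ht, le_rfl⟩

theorem pos_of_deriv_pos_at_zeros {F F' : ℝ → ℝ} {a : ℝ}
    (hF : ∀ t, a ≤ t → HasDerivAt F (F' t) t) (ha : F a = 0)
    (hpos : ∀ t, a ≤ t → F t = 0 → 0 < F' t) {t : ℝ} (ht : a < t) : 0 < F t := by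
  refine (nonneg_of_deriv_pos_at_zeros hF ha.ge hpos ht.le).lt_of_ne' fun ht0 => ?_
  have hmin : IsLocalMin F t := by
    filter_upwards [Ioi_mem_nhds ht] with s hs
    rw [ht0]
    exact nonneg_of_deriv_pos_at_zeros hF ha.ge hpos hs.le
  exact (hpos t ht.le ht0).ne' (hmin.hasDerivAt_eq_zero (hF t ht.le))

theorem comparison_lemma_strict_general
    (f₁ f₂ : ℝ → ℝ) (hf₁ : Continuous f₁) (hf₂ : Continuous f₂)
    (hff : ∀ y : ℝ, f₁ y < f₂ y)
    (α₁ α₂ : ℝ → ℝ) (hα₁ : Continuous α₁) (hα₂ : Continuous α₂)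
    (hαα : ∀ t : ℝ, 0 ≤ t → α₁ t ≤ α₂ t)
    (g : ℝ → ℝ) (Y₀ : ℝ)
    (Y₁ Y₂ : ℝ → ℝ) (hY₁ : Continuous Y₁) (hY₂ : Continuous Y₂)
    (heq₁ : ∀ t : ℝ, 0 ≤ t →
      Y₁ t = Y₀ + (∫ s in (0:ℝ)..t, f₁ (Y₁ s)) + (∫ s in (0:ℝ)..t, α₁ s) + g t)
    (heq₂ : ∀ t : ℝ, 0 ≤ t →
      Y₂ t = Y₀ + (∫ s in (0:ℝ)..t, f₂ (Y₂ s)) + (∫ s in (0:ℝ)..t, α₂ s) + g t) :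
    ∀ t : ℝ, 0 < t → Y₁ t < Y₂ t := by
  set φ : ℝ → ℝ := fun s => f₂ (Y₂ s) - f₁ (Y₁ s) + (α₂ s - α₁ s)
  have hφ : Continuous φ := by fun_prop
  have hdiff : ∀ t, 0 ≤ t → ∫ s in (0:ℝ)..t, φ s = Y₂ t - Y₁ t := by
    intro t ht
    have hi : ∀ {h : ℝ → ℝ}, Continuous h → IntervalIntegrable h volume 0 t :=
      fun hh => hh.intervalIntegrable 0 t
    rw [intervalIntegral.integral_add (hi (by fun_prop)) (hi (by fun_prop)),
      intervalIntegral.integral_sub (hi (by fun_prop)) (hi (by fun_prop)),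
      intervalIntegral.integral_sub (hi hα₂) (hi hα₁), heq₁ t ht, heq₂ t ht]
    ring
  have hpos : ∀ t, 0 ≤ t → ∫ s in (0:ℝ)..t, φ s = 0 → 0 < φ t := by
    intro t ht h0
    have hY : Y₂ t = Y₁ t := by linarith [hdiff t ht]
    simp only [φ, hY]
    linarith [hff (Y₁ t), hαα t ht]
  intro t ht
  have hint := pos_of_deriv_pos_at_zeros
    (fun t _ => (hφ.integral_hasStrictDerivAt 0 t).hasDerivAt) intervalIntegral.integral_same hpos ht
  linarith [hdiff t ht.le]

/-- Pathwise comparison lemma with strict inequality of drifts. -/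
theorem comparison_lemma_strict
    (f₁ f₂ : ℝ → ℝ) (hf₁ : Continuous f₁) (hf₂ : Continuous f₂)
    (hff : ∀ y : ℝ, f₁ y < f₂ y)
    (α₁ α₂ : ℝ → ℝ) (hα₁ : Continuous α₁) (hα₂ : Continuous α₂)
    (hαα : ∀ t : ℝ, 0 ≤ t → α₁ t ≤ α₂ t)
    (g : ℝ → ℝ) (hg : Continuous g) (Y₀ : ℝ)
    (Y₁ Y₂ : ℝ → ℝ) (hY₁ : Continuous Y₁) (hY₂ : Continuous Y₂)
    (heq₁ : ∀ t : ℝ, 0 ≤ t →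
      Y₁ t = Y₀ + (∫ s in (0:ℝ)..t, f₁ (Y₁ s)) + (∫ s in (0:ℝ)..t, α₁ s) + g t)
    (heq₂ : ∀ t : ℝ, 0 ≤ t →
      Y₂ t = Y₀ + (∫ s in (0:ℝ)..t, f₂ (Y₂ s)) + (∫ s in (0:ℝ)..t, α₂ s) + g t) :
    ∀ t : ℝ, 0 < t → Y₁ t < Y₂ t :=
  comparison_lemma_strict_general f₁ f₂ hf₁ hf₂ hff α₁ α₂ hα₁ hα₂ hαα g Y₀ Y₁ Y₂ hY₁ hY₂ heq₁ heq₂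
end

section
/- Fix $Y_0, k, a, \sigma > 0$ and a continuous $g:[0,\infty)\to\mathbb{R}$ with $g(0)=0$. For $\varepsilon>0$ let $Y_\varepsilon$ be the continuous solution of $Y_\varepsilon(t) = Y_0 + \int_0^t \frac{k}{Y_\varepsilon(s)\mathbf{1}_{\{Y_\varepsilon(s)>0\}}+\varepsilon}\,ds - a\int_0^t Y_\varepsilon(s)\,ds + \sigma g(t)$. Then for any $0 < \varepsilon_2 < \varepsilon_1$ and all $t > 0$, $Y_{\varepsilon_1}(t) < Y_{\varepsilon_2}(t)$; consequently, for each $t\ge 0$ the limit $Y(t) = \lim_{\varepsilon\downarrow 0} Y_\varepsilon(t)$ exists in $(-\infty, +\infty]$ and is finite (bounded above by $C_1^{1/r} + C_2^{1/r}\sup_{[0,T]}|g|$ on any $[0,T]$). -/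
open Filter Topology MeasureTheory Set

/-!
Although `g` is only continuous, `X_ε = Y_ε - σ g` is `C¹` with `X_ε' = f_ε(Y_ε)`, so both parts
are fencing arguments for differentiable functions. For `ε₂ < ε₁` the difference
`Y_{ε₂} - Y_{ε₁} = X_{ε₂} - X_{ε₁}` vanishes at `0` and has derivative `f_{ε₂}(y) - f_{ε₁}(y) > 0`
wherever it vanishes, so it stays positive. On `[0, T]`, `X_ε` cannot cross the line
`Y₀ + sup|σ g| + k t / Y₀`, since at a crossing `Y_ε ≥ Y₀` and hence `f_ε(Y_ε) < k / Y₀`.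
So `ε ↦ Y_ε(t)` is antitone and bounded above uniformly in `ε`, and converges as `ε ↓ 0`.
-/

theorem HasDerivAt.nonpos_of_eventually_le_left {Z : ℝ → ℝ} {c t₀ : ℝ}
    (hd : HasDerivAt Z c t₀) (h : ∀ᶠ t in 𝓝[<] t₀, Z t₀ ≤ Z t) : c ≤ 0 := by
  refine le_of_tendsto (hasDerivAt_iff_tendsto_slope_left_right.1 hd).1 ?_
  filter_upwards [h, self_mem_nhdsWithin] with t hle hlt
  rw [slope_def_field]
  exact div_nonpos_of_nonneg_of_nonpos (sub_nonneg.2 hle) (sub_nonpos.2 (le_of_lt hlt))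

theorem pos_of_hasDerivAt_of_deriv_pos_at_zeros {Z Z' : ℝ → ℝ} (hZ : ∀ t, HasDerivAt Z (Z' t) t)
    (hZ0 : Z 0 = 0) (hZ' : ∀ t, 0 ≤ t → Z t = 0 → 0 < Z' t) {t : ℝ} (ht : 0 < t) :
    0 < Z t := by
  have hnonneg : ∀ x ∈ Icc 0 t, 0 ≤ Z x :=
    image_le_of_deriv_right_lt_deriv_boundary (f' := fun _ => 0) continuousOn_const
      (fun x _ => hasDerivWithinAt_const x _ 0) hZ0.ge hZ
      (fun x hx hx0 => hZ' x hx.1 hx0.symm)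
  refine (hnonneg t ⟨ht.le, le_rfl⟩).lt_of_ne fun ht0 => ?_
  have hleft : ∀ᶠ x in 𝓝[<] t, Z t ≤ Z x := by
    filter_upwards [Ioo_mem_nhdsLT ht] with x hx
    rw [← ht0]
    exact hnonneg x (Ioo_subset_Icc_self hx)
  exact ((hZ t).nonpos_of_eventually_le_left hleft).not_gt (hZ' t ht.le ht0.symm)

theorem hasDerivAt_integral_comp {F Y : ℝ → ℝ} (hF : Continuous F) (hY : Continuous Y) (t : ℝ) :
    HasDerivAt (fun t => ∫ s in (0 : ℝ)..t, F (Y s)) (F (Y t)) t :=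
  ((hF.comp hY).integral_hasStrictDerivAt 0 t).hasDerivAt

def IsIntegralSolution (F : ℝ → ℝ) (y₀ : ℝ) (w Y : ℝ → ℝ) : Prop :=
  Continuous Y ∧ ∀ t, 0 ≤ t → Y t = y₀ + (∫ s in (0 : ℝ)..t, F (Y s)) + w t

namespace IsIntegralSolution

variable {F F₁ F₂ : ℝ → ℝ} {y₀ : ℝ} {w Y Y₁ Y₂ : ℝ → ℝ}

theorem apply_zero (hY : IsIntegralSolution F y₀ w Y) : Y 0 = y₀ + w 0 := by
  simpa using hY.2 0 le_rfl

theorem lt_of_lt (hY₁ : IsIntegralSolution F₁ y₀ w Y₁) (hY₂ : IsIntegralSolution F₂ y₀ w Y₂)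
    (hF₁ : Continuous F₁) (hF₂ : Continuous F₂) (hF : ∀ y, F₁ y < F₂ y) {t : ℝ} (ht : 0 < t) :
    Y₁ t < Y₂ t := by
  have hdiff : ∀ t, 0 ≤ t →
      (∫ s in (0 : ℝ)..t, F₂ (Y₂ s)) - (∫ s in (0 : ℝ)..t, F₁ (Y₁ s)) = Y₂ t - Y₁ t := by
    intro t ht
    rw [hY₁.2 t ht, hY₂.2 t ht]
    ring
  rw [← sub_pos, ← hdiff t ht.le]
  refine pos_of_hasDerivAt_of_deriv_pos_at_zeros
    (Z := fun t => (∫ s in (0 : ℝ)..t, F₂ (Y₂ s)) - ∫ s in (0 : ℝ)..t, F₁ (Y₁ s))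
    (fun t => (hasDerivAt_integral_comp hF₂ hY₂.1 t).sub (hasDerivAt_integral_comp hF₁ hY₁.1 t))
    (by simp) (fun s hs hs0 => ?_) ht
  rw [hdiff s hs, sub_eq_zero] at hs0
  rw [sub_pos, hs0]
  exact hF _

theorem le_of_forall_lt (hY : IsIntegralSolution F y₀ w Y) (hF : Continuous F) {M G T : ℝ}
    (hM : 0 ≤ M) (hFM : ∀ y, y₀ ≤ y → F y < M) (hw : ∀ s ∈ Icc 0 T, |w s| ≤ G) {t : ℝ}
    (ht : t ∈ Icc 0 T) : Y t ≤ y₀ + M * t + 2 * G := by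
  set X : ℝ → ℝ := fun t => y₀ + ∫ s in (0 : ℝ)..t, F (Y s)
  have hX : ∀ t, HasDerivAt X (F (Y t)) t := fun t =>
    (hasDerivAt_integral_comp hF hY.1 t).const_add y₀
  have hXY : ∀ t, 0 ≤ t → Y t = X t + w t := hY.2
  have hG : 0 ≤ G := (abs_nonneg _).trans (hw 0 ⟨le_rfl, ht.1.trans ht.2⟩)
  have hB : ∀ x, HasDerivAt (fun x => y₀ + G + M * x) M x := fun x =>
    (((hasDerivAt_id' x).const_mul M).const_add _).congr_deriv (mul_one M)
  have hfence : X t ≤ y₀ + G + M * t := by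
    refine image_le_of_deriv_right_lt_deriv_boundary
      (fun x _ => (hX x).continuousAt.continuousWithinAt) (fun x _ => (hX x).hasDerivWithinAt)
      (by simpa [X] using hG) hB (fun x hx hXx => hFM _ ?_) ht
    have hwx := neg_le_of_abs_le (hw x (Ico_subset_Icc_self hx))
    have hMx : 0 ≤ M * x := mul_nonneg hM hx.1
    rw [hXY x hx.1, hXx]
    linarith
  have hwt := le_of_abs_le (hw t ht)
  rw [hXY t ht.1]
  linarith

end IsIntegralSolution

/-- The paper's `f_ε(y) = k / (y 𝟙_{y > 0} + ε) - a y`. -/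
noncomputable def drift (k a ε y : ℝ) : ℝ := k / (max y 0 + ε) - a * y

section Drift

variable {k a ε : ℝ}

theorem max_zero_add_pos (hε : 0 < ε) (y : ℝ) : 0 < max y 0 + ε :=
  add_pos_of_nonneg_of_pos (le_max_right _ _) hε

theorem continuous_drift (hε : 0 < ε) : Continuous (drift k a ε) :=
  (continuous_const.div ((continuous_id.max continuous_const).add continuous_const)
    fun y => (max_zero_add_pos hε y).ne').sub (continuous_const.mul continuous_id)

theorem drift_lt_drift {ε₁ ε₂ : ℝ} (hk : 0 < k) (hε₂ : 0 < ε₂) (h : ε₂ < ε₁) (y : ℝ) :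
    drift k a ε₁ y < drift k a ε₂ y := by
  have := div_lt_div_of_pos_left hk (max_zero_add_pos hε₂ y)
    (show max y 0 + ε₂ < max y 0 + ε₁ by linarith)
  unfold drift
  linarith

theorem drift_lt_of_le {y₀ y : ℝ} (hk : 0 < k) (ha : 0 ≤ a) (hε : 0 < ε) (hy₀ : 0 < y₀)
    (hy : y₀ ≤ y) : drift k a ε y < k / y₀ := by
  have hden : y₀ < max y 0 + ε := by linarith [le_max_left y 0]
  have := div_lt_div_of_pos_left hk hy₀ hden
  have : 0 ≤ a * y := mul_nonneg ha (hy₀.le.trans hy)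
  unfold drift
  linarith

theorem isIntegralSolution_drift {y₀ σ : ℝ} {g Y : ℝ → ℝ} (hε : 0 < ε) (hY : Continuous Y)
    (hYeq : ∀ t : ℝ, 0 ≤ t →
      Y t = y₀ + (∫ s in (0 : ℝ)..t, k / ((if 0 < Y s then Y s else 0) + ε))
        - a * (∫ s in (0 : ℝ)..t, Y s) + σ * g t) :
    IsIntegralSolution (drift k a ε) y₀ (fun t => σ * g t) Y := by
  have hite : ∀ y : ℝ, (if 0 < y then y else 0) = max y 0 := fun y => by
    split_ifs with h
    · exact (max_eq_left h.le).symm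
    · exact (max_eq_right (not_lt.1 h)).symm
  refine ⟨hY, fun t ht => ?_⟩
  have hint : ∫ s in (0 : ℝ)..t, drift k a ε (Y s) =
      (∫ s in (0 : ℝ)..t, k / (max (Y s) 0 + ε)) - a * ∫ s in (0 : ℝ)..t, Y s := by
    rw [← intervalIntegral.integral_const_mul]
    exact intervalIntegral.integral_sub
      ((continuous_const.div ((hY.max continuous_const).add continuous_const)
        fun s => (max_zero_add_pos hε (Y s)).ne').intervalIntegrable 0 t)
      ((continuous_const.mul hY).intervalIntegrable 0 t)
  rw [hint, hYeq t ht]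
  simp only [hite]
  ring

end Drift

theorem abs_le_iSup_Icc {g : ℝ → ℝ} (hg : Continuous g) {a b s : ℝ} (hs : s ∈ Icc a b) :
    |g s| ≤ ⨆ x : Icc a b, |g x| :=
  le_ciSup (isCompact_range (hg.abs.comp continuous_subtype_val)).bddAbove ⟨s, hs⟩

theorem le_rpow_one_div_of_rpow_le {x A r : ℝ} (hx : 0 ≤ x) (hr : 0 < r) (h : x ^ r ≤ A) :
    x ≤ A ^ (1 / r) := by
  rw [one_div, Real.le_rpow_inv_iff_of_pos hx ((Real.rpow_nonneg hx r).trans h) hr]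
  exact h

/-- The right-hand side is `C₁^{1/r} + C₂^{1/r} G` with the constants of the paper's moment
bound (Theorem 1). -/
theorem linear_bound_le_moment_bound {Y₀ k a σ T r G : ℝ} (hY₀ : 0 ≤ Y₀) (hk : 0 ≤ k)
    (ha : 0 ≤ a) (hσ : 0 ≤ σ) (hT : 0 ≤ T) (hr : 1 ≤ r) (hG : 0 ≤ G) :
    Y₀ + k / Y₀ * T + 2 * (σ * G) ≤
      (Real.exp ((8 * a * T) ^ r) * ((4 * Y₀) ^ r + (16 * k * T / Y₀) ^ r)) ^ (1 / r)
        + ((8 * σ) ^ r * Real.exp ((8 * a * T) ^ r)) ^ (1 / r) * G := by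
  set E := Real.exp ((8 * a * T) ^ r)
  have hE : 1 ≤ E := Real.one_le_exp (Real.rpow_nonneg (by positivity) r)
  have hr0 : 0 < r := by linarith
  have hA := Real.rpow_nonneg (by positivity : (0 : ℝ) ≤ 4 * Y₀) r
  have hB := Real.rpow_nonneg (by positivity : (0 : ℝ) ≤ 16 * k * T / Y₀) r
  have hS := Real.rpow_nonneg (by positivity : (0 : ℝ) ≤ 8 * σ) r
  have h₁ : 4 * Y₀ ≤ (E * ((4 * Y₀) ^ r + (16 * k * T / Y₀) ^ r)) ^ (1 / r) :=
    le_rpow_one_div_of_rpow_le (by positivity) hr0 (by nlinarith)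
  have h₂ : 16 * k * T / Y₀ ≤ (E * ((4 * Y₀) ^ r + (16 * k * T / Y₀) ^ r)) ^ (1 / r) :=
    le_rpow_one_div_of_rpow_le (by positivity) hr0 (by nlinarith)
  have h₃ : 8 * σ ≤ ((8 * σ) ^ r * E) ^ (1 / r) :=
    le_rpow_one_div_of_rpow_le (by positivity) hr0 (le_mul_of_one_le_right hS hE)
  have hkT : k / Y₀ * T = (16 * k * T / Y₀) / 16 := by ring
  nlinarith [mul_le_mul_of_nonneg_right h₃ hG]

theorem eps_approx_monotone_and_limit_general
    (Y₀ k a σ : ℝ) (hY₀ : 0 < Y₀) (hk : 0 < k) (ha : 0 < a) (hσ : 0 < σ)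
    (g : ℝ → ℝ) (hg : Continuous g)
    (Y : ℝ → ℝ → ℝ)
    (hYc : ∀ ε : ℝ, 0 < ε → Continuous (Y ε))
    (hYeq : ∀ ε : ℝ, 0 < ε → ∀ t : ℝ, 0 ≤ t →
      Y ε t = Y₀ + (∫ s in (0:ℝ)..t, k / ((if 0 < Y ε s then Y ε s else 0) + ε))
        - a * (∫ s in (0:ℝ)..t, Y ε s) + σ * g t) :
    (∀ ε₁ ε₂ : ℝ, 0 < ε₂ → ε₂ < ε₁ → ∀ t : ℝ, 0 < t → Y ε₁ t < Y ε₂ t) ∧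
    ∃ Ylim : ℝ → ℝ, ∀ t : ℝ, 0 ≤ t →
      Tendsto (fun ε => Y ε t) (𝓝[>] 0) (𝓝 (Ylim t)) ∧
      ∀ T r : ℝ, 0 < T → 1 ≤ r → t ≤ T →
        Ylim t ≤
          (Real.exp ((8 * a * T) ^ r) * ((4 * Y₀) ^ r + (16 * k * T / Y₀) ^ r)) ^ (1 / r)
            + ((8 * σ) ^ r * Real.exp ((8 * a * T) ^ r)) ^ (1 / r) *
              ⨆ s : Set.Icc (0:ℝ) T, |g s| := by
  have hsol (ε : ℝ) (hε : 0 < ε) : IsIntegralSolution (drift k a ε) Y₀ (fun t => σ * g t) (Y ε) :=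
    isIntegralSolution_drift hε (hYc ε hε) (hYeq ε hε)
  have hmono (ε₁ ε₂ : ℝ) (h₂ : 0 < ε₂) (h₁₂ : ε₂ < ε₁) (t : ℝ) (ht : 0 < t) : Y ε₁ t < Y ε₂ t :=
    (hsol ε₁ (h₂.trans h₁₂)).lt_of_lt (hsol ε₂ h₂) (continuous_drift (h₂.trans h₁₂))
      (continuous_drift h₂) (drift_lt_drift hk h₂ h₁₂) ht
  have hbound (T t : ℝ) (ht : t ∈ Icc 0 T) (ε : ℝ) (hε : 0 < ε) :
      Y ε t ≤ Y₀ + k / Y₀ * T + 2 * (σ * ⨆ s : Icc (0 : ℝ) T, |g s|) := by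
    refine ((hsol ε hε).le_of_forall_lt (continuous_drift hε)
      (G := σ * ⨆ s : Icc (0 : ℝ) T, |g s|) (by positivity)
      (fun y => drift_lt_of_le hk ha.le hε hY₀) (fun s hs => ?_) ht).trans ?_
    · rw [abs_mul, abs_of_pos hσ]
      exact mul_le_mul_of_nonneg_left (abs_le_iSup_Icc hg hs) hσ.le
    · gcongr
      exact ht.2
  have hanti (t : ℝ) (ht : 0 ≤ t) : AntitoneOn (fun ε => Y ε t) (Ioi 0) := by
    rcases ht.eq_or_lt with rfl | ht
    · intro ε₁ hε₁ ε₂ hε₂ _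
      exact ((hsol ε₁ hε₁).apply_zero.trans (hsol ε₂ hε₂).apply_zero.symm).ge
    · exact StrictAntiOn.antitoneOn fun ε₂ hε₂ ε₁ _ h => hmono ε₁ ε₂ hε₂ h t ht
  refine ⟨hmono, fun t => sSup ((fun ε => Y ε t) '' Ioi 0), fun t ht => ?_⟩
  have hlim := (hanti t ht).tendsto_nhdsGT
    ⟨_, forall_mem_image.2 fun ε hε => hbound t t ⟨ht, le_rfl⟩ ε hε⟩
  refine ⟨hlim, fun T r hT hr htT => le_of_tendsto hlim
    (eventually_nhdsWithin_of_forall fun ε hε => (hbound T t ⟨ht, htT⟩ ε hε).trans ?_)⟩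
  exact linear_bound_le_moment_bound hY₀.le hk.le ha.le hσ.le hT.le hr
    (Real.iSup_nonneg fun _ => abs_nonneg _)

/-- Monotonicity in ε of the ε-approximations and existence/finiteness of the
pointwise limit Y, with the explicit upper bound on compacts. -/
theorem eps_approx_monotone_and_limit
    (Y₀ k a σ : ℝ) (hY₀ : 0 < Y₀) (hk : 0 < k) (ha : 0 < a) (hσ : 0 < σ)
    (g : ℝ → ℝ) (hg : Continuous g) (hg0 : g 0 = 0)
    (Y : ℝ → ℝ → ℝ)
    (hYc : ∀ ε : ℝ, 0 < ε → Continuous (Y ε))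
    (hYeq : ∀ ε : ℝ, 0 < ε → ∀ t : ℝ, 0 ≤ t →
      Y ε t = Y₀ + (∫ s in (0:ℝ)..t, k / ((if 0 < Y ε s then Y ε s else 0) + ε))
        - a * (∫ s in (0:ℝ)..t, Y ε s) + σ * g t) :
    (∀ ε₁ ε₂ : ℝ, 0 < ε₂ → ε₂ < ε₁ → ∀ t : ℝ, 0 < t → Y ε₁ t < Y ε₂ t) ∧
    ∃ Ylim : ℝ → ℝ, ∀ t : ℝ, 0 ≤ t →
      Tendsto (fun ε => Y ε t) (𝓝[>] 0) (𝓝 (Ylim t)) ∧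
      ∀ T r : ℝ, 0 < T → 1 ≤ r → t ≤ T →
        Ylim t ≤
          (Real.exp ((8 * a * T) ^ r) * ((4 * Y₀) ^ r + (16 * k * T / Y₀) ^ r)) ^ (1 / r)
            + ((8 * σ) ^ r * Real.exp ((8 * a * T) ^ r)) ^ (1 / r) *
              ⨆ s : Set.Icc (0:ℝ) T, |g s| :=
  eps_approx_monotone_and_limit_general Y₀ k a σ hY₀ hk ha hσ g hg Y hYc hYeq
end

section
/- With the setup of the $\varepsilon$-approximations $Y_\varepsilon$ (continuous solutions of $Y_\varepsilon(t) = Y_0 + \int_0^t \frac{k}{Y_\varepsilon(s)\mathbf{1}_{\{Y_\varepsilon(s)>0\}}+\varepsilon}\,ds - a\int_0^t Y_\varepsilon(s)\,ds + \sigma g(t)$ for a fixed continuous path $g$), suppose that the limit $Y(t)=\lim_{\varepsilon\downarrow0}Y_\varepsilon(t)$ is finite for every $t\in[0,T]$ and that $\lim_{\varepsilon\to0}\int_0^T \frac{k}{Y_\varepsilon(s)\mathbf{1}_{\{Y_\varepsilon(s)>0\}}+\varepsilon}\,ds < \infty$. Then the Lebesgue measure $\lambda\{t\in[0,T] : Y_\varepsilon(t)\le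 0\}$ tends to $0$ as $\varepsilon\to 0$. -/
/-! Where `Y ε ≤ 0` the drift `k / (Y ε 1_{Y ε > 0} + ε)` equals `k / ε`, so by Markov's
inequality the measure of that set is at most `ε / k` times the drift integral. The drift
integrals converge, hence are eventually bounded by `L + 1`, and the measure is `O(ε)`. -/

open Filter Topology MeasureTheory Set

noncomputable def truncatedDrift (k ε x : ℝ) : ℝ := k / ((if 0 < x then x else 0) + ε)

lemma truncatedDrift_eq_max (k ε x : ℝ) : truncatedDrift k ε x = k / (max x 0 + ε) := by
  rw [truncatedDrift, max_comm, max_def_lt]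

lemma truncatedDrift_nonneg {k ε : ℝ} (hk : 0 ≤ k) (hε : 0 < ε) (x : ℝ) :
    0 ≤ truncatedDrift k ε x := by
  rw [truncatedDrift_eq_max]; positivity

lemma truncatedDrift_of_nonpos (k ε : ℝ) {x : ℝ} (hx : x ≤ 0) :
    truncatedDrift k ε x = k / ε := by
  simp [truncatedDrift, hx.not_gt]

lemma continuous_truncatedDrift (k : ℝ) {ε : ℝ} (hε : 0 < ε) :
    Continuous (truncatedDrift k ε) := by
  simp_rw [funext (truncatedDrift_eq_max k ε)]
  exact continuous_const.div ((continuous_id.max continuous_const).add continuous_const)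
    fun x => by positivity

lemma volume_nonpos_le_mul_integral_truncatedDrift {k ε T : ℝ} (hk : 0 < k) (hε : 0 < ε)
    (hT : 0 ≤ T) {y : ℝ → ℝ} (hy : Continuous y) :
    volume {t ∈ Icc 0 T | y t ≤ 0} ≤
      ENNReal.ofReal (ε / k * ∫ s in 0..T, truncatedDrift k ε (y s)) := by
  set μ := volume.restrict (Icc 0 T)
  set B := {s | k / ε ≤ truncatedDrift k ε (y s)}
  have hf : Continuous fun s => truncatedDrift k ε (y s) :=
    (continuous_truncatedDrift k hε).comp hy
  have hmarkov := mul_meas_ge_le_integral_of_nonneg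
    (Eventually.of_forall fun s => truncatedDrift_nonneg hk.le hε (y s))
    (hf.integrableOn_Icc (μ := volume) (a := 0) (b := T)) (k / ε)
  rw [intervalIntegral.integral_of_le hT, ← integral_Icc_eq_integral_Ioc]
  calc volume {t ∈ Icc 0 T | y t ≤ 0}
      ≤ μ B := by
        refine (measure_mono (t := B ∩ Icc 0 T) fun t ht => ⟨?_, ht.1⟩).trans
          (Measure.le_restrict_apply _ _)
        exact (truncatedDrift_of_nonpos k ε ht.2).ge
    _ = ENNReal.ofReal (μ.real B) := (ENNReal.ofReal_toReal (measure_ne_top _ _)).symm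
    _ ≤ _ := by
        gcongr
        calc μ.real B = ε / k * (k / ε * μ.real B) := by field_simp
          _ ≤ _ := by gcongr

theorem measure_nonpositive_tendsto_zero_general
    (k T : ℝ) (hk : 0 < k) (hT : 0 < T)
    (Y : ℝ → ℝ → ℝ)
    (hYc : ∀ ε : ℝ, 0 < ε → Continuous (Y ε))
    (L : ℝ)
    (hL : Tendsto
      (fun ε => ∫ s in (0:ℝ)..T, k / ((if 0 < Y ε s then Y ε s else 0) + ε))
      (𝓝[>] 0) (𝓝 L)) :
    Tendsto (fun ε => volume {t ∈ Set.Icc (0:ℝ) T | Y ε t ≤ 0}) (𝓝[>] 0) (𝓝 0) := by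
  have hbound : ∀ᶠ ε in 𝓝[>] 0,
      volume {t ∈ Icc 0 T | Y ε t ≤ 0} ≤ ENNReal.ofReal (ε / k * (L + 1)) := by
    filter_upwards [self_mem_nhdsWithin, hL.eventually (eventually_lt_nhds (lt_add_one L))]
      with ε hε hlt
    have hε : 0 < ε := hε
    refine (volume_nonpos_le_mul_integral_truncatedDrift hk hε hT.le (hYc ε hε)).trans ?_
    gcongr
    exact hlt.le
  have hzero : Tendsto (fun ε => ε / k * (L + 1)) (𝓝[>] 0) (𝓝 0) :=
    tendsto_nhdsWithin_of_tendsto_nhds <| by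
      simpa using ((tendsto_id (x := 𝓝 (0 : ℝ))).div_const k).mul_const (L + 1)
  exact tendsto_of_tendsto_of_tendsto_of_le_of_le' tendsto_const_nhds
    (by simpa using ENNReal.tendsto_ofReal hzero) (Eventually.of_forall fun _ => zero_le) hbound

/-- Pathwise version of Lemma 2: the Lebesgue measure of the set where the
ε-approximation is nonpositive tends to zero as ε → 0. -/
theorem measure_nonpositive_tendsto_zero
    (Y₀ k a σ T : ℝ) (hY₀ : 0 < Y₀) (hk : 0 < k) (ha : 0 < a) (hσ : 0 < σ) (hT : 0 < T)
    (g : ℝ → ℝ) (hg : Continuous g) (hg0 : g 0 = 0)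
    (Y : ℝ → ℝ → ℝ) (Ylim : ℝ → ℝ)
    (hYc : ∀ ε : ℝ, 0 < ε → Continuous (Y ε))
    (hYeq : ∀ ε : ℝ, 0 < ε → ∀ t ∈ Set.Icc (0:ℝ) T,
      Y ε t = Y₀ + (∫ s in (0:ℝ)..t, k / ((if 0 < Y ε s then Y ε s else 0) + ε))
        - a * (∫ s in (0:ℝ)..t, Y ε s) + σ * g t)
    (hlim : ∀ t ∈ Set.Icc (0:ℝ) T,
      Tendsto (fun ε => Y ε t) (𝓝[>] 0) (𝓝 (Ylim t)))
    (L : ℝ)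
    (hL : Tendsto
      (fun ε => ∫ s in (0:ℝ)..T, k / ((if 0 < Y ε s then Y ε s else 0) + ε))
      (𝓝[>] 0) (𝓝 L)) :
    Tendsto (fun ε => volume {t ∈ Set.Icc (0:ℝ) T | Y ε t ≤ 0}) (𝓝[>] 0) (𝓝 0) :=
  measure_nonpositive_tendsto_zero_general k T hk hT Y hYc L hL
end

section
/- Under the setup of the previous statements (pathwise $\varepsilon$-approximations with fixed continuous driving path $g$, and pointwise limit $Y$ finite on $[0,T]$ with convergent drift integrals), the limit process satisfies $Y(t) > 0$ for Lebesgue-almost every $t\in[0,T]$. -/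
/-!
The drift integrands `k / (Y_ε⁺ + ε)` have integrals over `[0, T]` converging to the finite
limit `L`, so by Fatou's lemma their `liminf` along `ε → 0` is finite almost everywhere.
At a time `t` with `Y(t) ≤ 0` the denominator tends to `0⁺`, so the integrand tends to `+∞`;
such times therefore form a null set.
-/

open Filter Topology MeasureTheory Set

lemma ite_pos_self_zero_eq_max {α : Type*} [LinearOrder α] [Zero α] (x : α) :
    (if 0 < x then x else 0) = max x 0 := by
  split_ifs with h
  · exact (max_eq_left h.le).symm
  · exact (max_eq_right (not_lt.mp h)).symm

lemma ae_not_tendsto_atTop_of_tendsto_integral {α : Type*} [MeasurableSpace α] {μ : Measure α}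
    {f : ℕ → α → ℝ} {L : ℝ} (hf_meas : ∀ n, Measurable (f n)) (hf_nonneg : ∀ n, 0 ≤ᵐ[μ] f n)
    (hf_int : ∀ n, Integrable (f n) μ)
    (hL : Tendsto (fun n => ∫ x, f n x ∂μ) atTop (𝓝 L)) :
    ∀ᵐ x ∂μ, ¬ Tendsto (fun n => f n x) atTop atTop := by
  set F : ℕ → α → ENNReal := fun n x => ENNReal.ofReal (f n x)
  have hF_meas : ∀ n, Measurable (F n) := fun n => (hf_meas n).ennreal_ofReal
  have hF_lintegral : Tendsto (fun n => ∫⁻ x, F n x ∂μ) atTop (𝓝 (ENNReal.ofReal L)) := by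
    simp_rw [F, ← ofReal_integral_eq_lintegral_ofReal (hf_int _) (hf_nonneg _)]
    exact (ENNReal.continuous_ofReal.tendsto L).comp hL
  have hfatou : ∫⁻ x, liminf (fun n => F n x) atTop ∂μ < ⊤ :=
    (lintegral_liminf_le hF_meas).trans_lt (hF_lintegral.liminf_eq ▸ ENNReal.ofReal_lt_top)
  filter_upwards [ae_lt_top (Measurable.liminf hF_meas) hfatou.ne] with x hx htop
  exact hx.ne (ENNReal.tendsto_ofReal_atTop.comp htop).liminf_eq

lemma tendsto_div_max_zero_add_atTop {ι : Type*} {l : Filter ι} {y ε : ι → ℝ} {y₀ k : ℝ}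
    (hk : 0 < k) (hy : Tendsto y l (𝓝 y₀)) (hy₀ : y₀ ≤ 0) (hε : Tendsto ε l (𝓝[>] 0)) :
    Tendsto (fun i => k / (max (y i) 0 + ε i)) l atTop := by
  obtain ⟨hε_lim, hε_pos⟩ := tendsto_nhdsWithin_iff.1 hε
  have hden : Tendsto (fun i => max (y i) 0 + ε i) l (𝓝[>] 0) := by
    refine tendsto_nhdsWithin_of_tendsto_nhds_of_eventually_within _ ?_ ?_
    · simpa [max_eq_right hy₀] using (hy.max (tendsto_const_nhds (x := (0 : ℝ)))).add hε_lim
    · filter_upwards [hε_pos] with i hi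
      exact add_pos_of_nonneg_of_pos (le_max_right _ _) (mem_Ioi.1 hi)
  simpa [div_eq_mul_inv] using (tendsto_inv_nhdsGT_zero.comp hden).const_mul_atTop hk

theorem limit_process_positive_ae_general
    (k T : ℝ) (hk : 0 < k) (hT : 0 < T)
    (Y : ℝ → ℝ → ℝ) (Ylim : ℝ → ℝ)
    (hYc : ∀ ε : ℝ, 0 < ε → Continuous (Y ε))
    (hlim : ∀ t ∈ Set.Icc (0:ℝ) T,
      Tendsto (fun ε => Y ε t) (𝓝[>] 0) (𝓝 (Ylim t)))
    (L : ℝ)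
    (hL : Tendsto
      (fun ε => ∫ s in (0:ℝ)..T, k / ((if 0 < Y ε s then Y ε s else 0) + ε))
      (𝓝[>] 0) (𝓝 L)) :
    ∀ᵐ t ∂(volume.restrict (Set.Icc (0:ℝ) T)), 0 < Ylim t := by
  set ε : ℕ → ℝ := fun n => 1 / (n + 1)
  have hε_pos : ∀ n, 0 < ε n := fun n => by positivity
  have hε : Tendsto ε atTop (𝓝[>] 0) :=
    tendsto_nhdsWithin_of_tendsto_nhds_of_eventually_within _
      tendsto_one_div_add_atTop_nhds_zero_nat (.of_forall hε_pos)
  set f : ℕ → ℝ → ℝ := fun n s => k / (max (Y (ε n) s) 0 + ε n)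
  have hden : ∀ n s, 0 < max (Y (ε n) s) 0 + ε n := fun n s =>
    add_pos_of_nonneg_of_pos (le_max_right _ _) (hε_pos n)
  have hf_cont : ∀ n, Continuous (f n) := fun n =>
    continuous_const.div (((hYc _ (hε_pos n)).max continuous_const).add continuous_const)
      fun s => (hden n s).ne'
  have hf_lim : Tendsto (fun n => ∫ s in Ioc 0 T, f n s) atTop (𝓝 L) := by
    simp only [ite_pos_self_zero_eq_max] at hL
    simpa [f, intervalIntegral.integral_of_le hT.le, Function.comp_def] using hL.comp hε
  have hf_finite := ae_not_tendsto_atTop_of_tendsto_integral (fun n => (hf_cont n).measurable)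
    (fun n => .of_forall fun s => div_nonneg hk.le (hden n s).le)
    (fun n => (hf_cont n).integrableOn_Ioc) hf_lim
  rw [Measure.restrict_congr_set Ioc_ae_eq_Icc] at hf_finite
  filter_upwards [hf_finite, ae_restrict_mem measurableSet_Icc] with t ht_finite ht
  by_contra! hYt
  exact ht_finite (tendsto_div_max_zero_add_atTop hk ((hlim t ht).comp hε) hYt hε)

/-- Corollary 4 (pathwise): the limit process Y is positive almost everywhere
on [0,T]. -/
theorem limit_process_positive_ae
    (Y₀ k a σ T : ℝ) (hY₀ : 0 < Y₀) (hk : 0 < k) (ha : 0 < a) (hσ : 0 < σ) (hT : 0 < T)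
    (g : ℝ → ℝ) (hg : Continuous g) (hg0 : g 0 = 0)
    (Y : ℝ → ℝ → ℝ) (Ylim : ℝ → ℝ)
    (hYc : ∀ ε : ℝ, 0 < ε → Continuous (Y ε))
    (hYeq : ∀ ε : ℝ, 0 < ε → ∀ t ∈ Set.Icc (0:ℝ) T,
      Y ε t = Y₀ + (∫ s in (0:ℝ)..t, k / ((if 0 < Y ε s then Y ε s else 0) + ε))
        - a * (∫ s in (0:ℝ)..t, Y ε s) + σ * g t)
    (hlim : ∀ t ∈ Set.Icc (0:ℝ) T,
      Tendsto (fun ε => Y ε t) (𝓝[>] 0) (𝓝 (Ylim t)))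
    (L : ℝ)
    (hL : Tendsto
      (fun ε => ∫ s in (0:ℝ)..T, k / ((if 0 < Y ε s then Y ε s else 0) + ε))
      (𝓝[>] 0) (𝓝 L)) :
    ∀ᵐ t ∂(volume.restrict (Set.Icc (0:ℝ) T)), 0 < Ylim t :=
  limit_process_positive_ae_general k T hk hT Y Ylim hYc hlim L hL
end

section
/- Fix $\varepsilon^*>0$. Under the setup of the pathwise $\varepsilon$-approximations $Y_\varepsilon$ (continuous solutions driven by a fixed continuous path $g$, with uniqueness of solutions for each $\varepsilon>0$), for every $t>0$ one has $\lim_{\varepsilon\to\varepsilon^*} Y_\varepsilon(t) = Y_{\varepsilon^*}(t)$; i.e., the map $\varepsilon\mapsto Y_\varepsilon(t)$ is continuous on $(0,\infty)$. -/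
/-!
For `ε, ε' ≥ η > 0` the drifts `y ↦ k / (y⁺ + ε) - a y` are `(|k| / η² + |a|)`-Lipschitz and differ
uniformly by at most `|k| |ε - ε'| / η²`. Since `Y_ε` and `Y_ε'` solve integral equations with the
same forcing `Y₀ + σ g`, Grönwall's inequality bounds `|Y_ε t - Y_ε' t|` by a quantity that tends to
`0` as `ε → ε'`.
-/

open Filter Topology MeasureTheory Set

open scoped NNReal

section IntegralEquation

variable {E : Type*} [NormedAddCommGroup E] [NormedSpace ℝ E] [CompleteSpace E]

theorem hasDerivWithinAt_Ici_of_eq_add_integral {F h : ℝ → E} {c : E} (hh : Continuous h)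
    (hF : ∀ t, 0 ≤ t → F t = c + ∫ s in (0:ℝ)..t, h s) {x : ℝ} (hx : 0 ≤ x) :
    HasDerivWithinAt F (h x) (Ici x) x :=
  ((hh.integral_hasStrictDerivAt 0 x).hasDerivAt.const_add c).hasDerivWithinAt.congr
    (fun y hy => hF y (hx.trans hy)) (hF x hx)

theorem dist_le_gronwallBound_of_eq_add_integral {b₁ b₂ : E → E} {K : ℝ≥0} {δ : ℝ}
    (hb₁ : LipschitzWith K b₁) (hb₂ : Continuous b₂) (hδ : ∀ y, ‖b₁ y - b₂ y‖ ≤ δ)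
    {φ Y₁ Y₂ : ℝ → E} (hY₁ : Continuous Y₁) (hY₂ : Continuous Y₂)
    (h₁ : ∀ t, 0 ≤ t → Y₁ t = φ t + ∫ s in (0:ℝ)..t, b₁ (Y₁ s))
    (h₂ : ∀ t, 0 ≤ t → Y₂ t = φ t + ∫ s in (0:ℝ)..t, b₂ (Y₂ s)) {t : ℝ} (ht : 0 ≤ t) :
    dist (Y₁ t) (Y₂ t) ≤ gronwallBound 0 K δ t := by
  have hc₁ : Continuous fun s => b₁ (Y₁ s) := hb₁.continuous.comp hY₁
  have hc₂ : Continuous fun s => b₂ (Y₂ s) := hb₂.comp hY₂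
  have hF : ∀ u, 0 ≤ u → (Y₁ - Y₂) u = 0 + ∫ s in (0:ℝ)..u, b₁ (Y₁ s) - b₂ (Y₂ s) := by
    intro u hu
    rw [intervalIntegral.integral_sub (hc₁.intervalIntegrable _ _) (hc₂.intervalIntegrable _ _),
      Pi.sub_apply, h₁ u hu, h₂ u hu]
    abel
  have hbound : ∀ x ∈ Ico 0 t,
      ‖b₁ (Y₁ x) - b₂ (Y₂ x)‖ ≤ K * ‖(Y₁ - Y₂) x‖ + δ := fun x _ =>
    calc ‖b₁ (Y₁ x) - b₂ (Y₂ x)‖ ≤ ‖b₁ (Y₁ x) - b₁ (Y₂ x)‖ + ‖b₁ (Y₂ x) - b₂ (Y₂ x)‖ :=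
          norm_sub_le_norm_sub_add_norm_sub _ _ _
      _ ≤ K * ‖(Y₁ - Y₂) x‖ + δ := by
          gcongr
          · simpa only [← dist_eq_norm, Pi.sub_apply] using hb₁.dist_le_mul _ _
          · exact hδ _
  simpa [dist_eq_norm] using norm_le_gronwallBound_of_norm_deriv_right_le (hY₁.sub hY₂).continuousOn
    (fun x hx => hasDerivWithinAt_Ici_of_eq_add_integral (hc₁.sub hc₂) hF hx.1)
    (by simp [hF 0 le_rfl]) hbound t ⟨ht, le_rfl⟩

end IntegralEquation

theorem abs_div_sub_div_le {k u v η : ℝ} (hη : 0 < η) (hu : η ≤ u) (hv : η ≤ v) :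
    |k / u - k / v| ≤ |k| / η ^ 2 * |u - v| := by
  have hu₀ : 0 < u := hη.trans_le hu
  have hv₀ : 0 < v := hη.trans_le hv
  have huv : η ^ 2 ≤ u * v := by nlinarith
  have hdiff : k / u - k / v = k * (v - u) / (u * v) := by field_simp
  rw [hdiff, abs_div, abs_mul, abs_of_pos (mul_pos hu₀ hv₀), abs_sub_comm v u, mul_div_right_comm]
  gcongr

theorem ite_pos_self_eq_max (x : ℝ) : (if 0 < x then x else 0) = max x 0 := by
  split_ifs with hx
  · exact (max_eq_left hx.le).symm
  · exact (max_eq_right (not_lt.1 hx)).symm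

noncomputable def epsDrift (k a ε y : ℝ) : ℝ := k / (max y 0 + ε) - a * y

section epsDrift

variable {k a η : ℝ}

theorem lipschitzWith_epsDrift (hη : 0 < η) {ε : ℝ} (hε : η ≤ ε) :
    LipschitzWith (|k| / η ^ 2 + |a|).toNNReal (epsDrift k a ε) := by
  refine LipschitzWith.of_dist_le_mul fun x y => ?_
  rw [Real.coe_toNNReal _ (by positivity), Real.dist_eq, Real.dist_eq]
  have hmax : |max x 0 + ε - (max y 0 + ε)| ≤ |x - y| := by
    simpa only [add_sub_add_right_eq_sub] using abs_max_sub_max_le_abs x y 0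
  calc |epsDrift k a ε x - epsDrift k a ε y|
      = |(k / (max x 0 + ε) - k / (max y 0 + ε)) - a * (x - y)| := by
        rw [epsDrift, epsDrift]; congr 1; ring
    _ ≤ |k / (max x 0 + ε) - k / (max y 0 + ε)| + |a| * |x - y| :=
        (abs_sub _ _).trans_eq (by rw [abs_mul])
    _ ≤ |k| / η ^ 2 * |x - y| + |a| * |x - y| := by
        gcongr
        exact (abs_div_sub_div_le hη (by linarith [le_max_right x 0])
          (by linarith [le_max_right y 0])).trans (by gcongr)
    _ = (|k| / η ^ 2 + |a|) * |x - y| := by ring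

theorem abs_epsDrift_sub_epsDrift_le (hη : 0 < η) {ε₁ ε₂ : ℝ} (hε₁ : η ≤ ε₁) (hε₂ : η ≤ ε₂)
    (y : ℝ) : |epsDrift k a ε₁ y - epsDrift k a ε₂ y| ≤ |k| / η ^ 2 * |ε₁ - ε₂| := by
  simpa only [epsDrift, sub_sub_sub_cancel_right, add_sub_add_left_eq_sub] using
    abs_div_sub_div_le (k := k) (u := max y 0 + ε₁) (v := max y 0 + ε₂) hη
      (by linarith [le_max_right y 0]) (by linarith [le_max_right y 0])

theorem eq_add_integral_epsDrift {Y₀ σ ε : ℝ} (hε : 0 < ε) {Y g : ℝ → ℝ} (hY : Continuous Y)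
    {t : ℝ} (h : Y t = Y₀ + (∫ s in (0:ℝ)..t, k / ((if 0 < Y s then Y s else 0) + ε))
      - a * (∫ s in (0:ℝ)..t, Y s) + σ * g t) :
    Y t = Y₀ + σ * g t + ∫ s in (0:ℝ)..t, epsDrift k a ε (Y s) := by
  have hden : Continuous fun s => k / (max (Y s) 0 + ε) :=
    continuous_const.div (by fun_prop) fun s => by positivity
  simp only [epsDrift, ite_pos_self_eq_max] at h ⊢
  rw [h, intervalIntegral.integral_sub (hden.intervalIntegrable _ _)
    ((hY.intervalIntegrable _ _).const_mul a), intervalIntegral.integral_const_mul]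
  ring

end epsDrift

theorem eps_approx_continuous_in_eps_general
    (Y₀ k a σ : ℝ)
    (g : ℝ → ℝ)
    (Y : ℝ → ℝ → ℝ)
    (hYc : ∀ ε : ℝ, 0 < ε → Continuous (Y ε))
    (hYeq : ∀ ε : ℝ, 0 < ε → ∀ t : ℝ, 0 ≤ t →
      Y ε t = Y₀ + (∫ s in (0:ℝ)..t, k / ((if 0 < Y ε s then Y ε s else 0) + ε))
        - a * (∫ s in (0:ℝ)..t, Y ε s) + σ * g t) :
    ∀ ε' : ℝ, 0 < ε' → ∀ t : ℝ, 0 < t →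
      Tendsto (fun ε => Y ε t) (𝓝[≠] ε') (𝓝 (Y ε' t)) := by
  intro ε' hε' t ht
  have hη : 0 < ε' / 2 := half_pos hε'
  set K := (|k| / (ε' / 2) ^ 2 + |a|).toNNReal
  set bound := fun ε => gronwallBound 0 K (|k| / (ε' / 2) ^ 2 * |ε - ε'|) t
  have hnear : ∀ᶠ ε in 𝓝 ε', dist (Y ε t) (Y ε' t) ≤ bound ε := by
    filter_upwards [Ioi_mem_nhds (half_lt_self hε')] with ε hε
    have hε₀ : 0 < ε := hη.trans hε
    exact dist_le_gronwallBound_of_eq_add_integral (lipschitzWith_epsDrift hη hε.le)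
      (lipschitzWith_epsDrift hη (half_le_self hε'.le)).continuous
      (abs_epsDrift_sub_epsDrift_le hη hε.le (half_le_self hε'.le)) (hYc ε hε₀) (hYc ε' hε')
      (fun s hs => eq_add_integral_epsDrift hε₀ (hYc ε hε₀) (hYeq ε hε₀ s hs))
      (fun s hs => eq_add_integral_epsDrift hε' (hYc ε' hε') (hYeq ε' hε' s hs)) ht.le
  have hbound : Tendsto bound (𝓝 ε') (𝓝 0) := by
    have hcont : Continuous bound := (gronwallBound_continuous_ε 0 K t).comp (by fun_prop)
    simpa [bound, gronwallBound_ε0_δ0] using hcont.tendsto ε'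
  exact (tendsto_iff_dist_tendsto_zero.2
    (squeeze_zero' (.of_forall fun _ => dist_nonneg) hnear hbound)).mono_left nhdsWithin_le_nhds

/-- Lemma 5 (pathwise): continuity of ε ↦ Y_ε(t) on (0, ∞). -/
theorem eps_approx_continuous_in_eps
    (Y₀ k a σ : ℝ) (hY₀ : 0 < Y₀) (hk : 0 < k) (ha : 0 < a) (hσ : 0 < σ)
    (g : ℝ → ℝ) (hg : Continuous g) (hg0 : g 0 = 0)
    (Y : ℝ → ℝ → ℝ)
    (hYc : ∀ ε : ℝ, 0 < ε → Continuous (Y ε))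
    (hYeq : ∀ ε : ℝ, 0 < ε → ∀ t : ℝ, 0 ≤ t →
      Y ε t = Y₀ + (∫ s in (0:ℝ)..t, k / ((if 0 < Y ε s then Y ε s else 0) + ε))
        - a * (∫ s in (0:ℝ)..t, Y ε s) + σ * g t)
    (huniq : ∀ ε : ℝ, 0 < ε → ∀ Z : ℝ → ℝ, Continuous Z →
      (∀ t : ℝ, 0 ≤ t →
        Z t = Y₀ + (∫ s in (0:ℝ)..t, k / ((if 0 < Z s then Z s else 0) + ε))
          - a * (∫ s in (0:ℝ)..t, Z s) + σ * g t) →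
      ∀ t : ℝ, 0 ≤ t → Z t = Y ε t) :
    ∀ ε' : ℝ, 0 < ε' → ∀ t : ℝ, 0 < t →
      Tendsto (fun ε => Y ε t) (𝓝[≠] ε') (𝓝 (Y ε' t)) :=
  eps_approx_continuous_in_eps_general Y₀ k a σ g Y hYc hYeq
end

section
/- Under the setup of the pathwise $\varepsilon$-approximations with pointwise limit $Y$ finite on $[0,\infty)$: the set $\{t>0 : Y(t)>0\}$ is open in $\mathbb{R}$. -/
/-!
Decreasing the regularization parameter `ε` raises the drift `k / (Y⁺ + ε)`, and the two
regularized equations share the same noise `σ g`, so their difference is an integral whose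
integrand is strictly positive wherever the two solutions meet; hence `Y ε` increases as `ε ↓ 0`.
The limit therefore dominates every `Y ε`, and `{t > 0 | Y t > 0}` is the union over `ε` of the
open sets `{t > 0 | Y ε t > 0}`.
-/

open Filter Topology MeasureTheory Set

theorem le_of_sub_eq_integral_of_pos {u v φ : ℝ → ℝ} (hφ : Continuous φ)
    (hvu : ∀ t, 0 ≤ t → v t - u t = ∫ s in (0 : ℝ)..t, φ s)
    (hpos : ∀ s, 0 ≤ s → u s = v s → 0 < φ s) {t : ℝ} (ht : 0 ≤ t) : u t ≤ v t := by
  have hderiv : ∀ x, HasDerivAt (fun t => ∫ s in (0 : ℝ)..t, φ s) (φ x) x := fun x =>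
    (hφ.integral_hasStrictDerivAt 0 x).hasDerivAt
  -- Fencing: the primitive of `φ` starts at `0` and has positive slope wherever it touches `0`.
  have hnonneg : 0 ≤ ∫ s in (0 : ℝ)..t, φ s :=
    image_le_of_deriv_right_lt_deriv_boundary' (f := fun _ => 0) (f' := fun _ => 0)
      continuousOn_const (fun _ _ => hasDerivWithinAt_const _ _ _)
      (by simp) (continuous_iff_continuousAt.2 fun x => (hderiv x).continuousAt).continuousOn
      (fun x _ => (hderiv x).hasDerivWithinAt)
      (fun x hx hx0 => hpos x hx.1 (sub_eq_zero.1 ((hvu x hx.1).trans hx0.symm)).symm)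
      ⟨ht, le_rfl⟩
  linarith [hvu t ht]

noncomputable def regDrift (k ε y : ℝ) : ℝ := k / ((if 0 < y then y else 0) + ε)

theorem regDrift_eq_div_max (k ε y : ℝ) : regDrift k ε y = k / (max y 0 + ε) := by
  unfold regDrift
  split_ifs with hy
  · rw [max_eq_left hy.le]
  · rw [max_eq_right (not_lt.1 hy)]

theorem continuous_regDrift (k : ℝ) {ε : ℝ} (hε : 0 < ε) : Continuous (regDrift k ε) := by
  simp_rw [funext (regDrift_eq_div_max k ε)]
  exact continuous_const.div ((continuous_id.max continuous_const).add continuous_const)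
    fun y => by positivity

theorem regDrift_lt_regDrift {k ε ε' : ℝ} (hk : 0 < k) (hε' : 0 < ε') (hε'ε : ε' < ε)
    (y : ℝ) : regDrift k ε y < regDrift k ε' y := by
  simp only [regDrift_eq_div_max]
  have : 0 < max y 0 + ε' := by positivity
  gcongr

def SolvesRegularized (Y₀ k a σ : ℝ) (g : ℝ → ℝ) (Y : ℝ → ℝ → ℝ) : Prop :=
  ∀ ε : ℝ, 0 < ε → ∀ t : ℝ, 0 ≤ t →
    Y ε t = Y₀ + (∫ s in (0:ℝ)..t, regDrift k ε (Y ε s)) - a * (∫ s in (0:ℝ)..t, Y ε s) + σ * g t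

section Regularized

variable {Y₀ k a σ : ℝ} {g : ℝ → ℝ} {Y : ℝ → ℝ → ℝ}

theorem sub_eq_integral_regDrift (hYc : ∀ ε : ℝ, 0 < ε → Continuous (Y ε))
    (hYeq : SolvesRegularized Y₀ k a σ g Y)
    {ε ε' : ℝ} (hε : 0 < ε) (hε' : 0 < ε') {t : ℝ} (ht : 0 ≤ t) :
    Y ε' t - Y ε t = ∫ s in (0:ℝ)..t,
      (regDrift k ε' (Y ε' s) - regDrift k ε (Y ε s) - a * (Y ε' s - Y ε s)) := by
  have hdrift : ∀ δ, 0 < δ → IntervalIntegrable (fun s => regDrift k δ (Y δ s)) volume 0 t :=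
    fun δ hδ => ((continuous_regDrift k hδ).comp (hYc δ hδ)).intervalIntegrable _ _
  have hY : ∀ δ, 0 < δ → IntervalIntegrable (Y δ) volume 0 t :=
    fun δ hδ => (hYc δ hδ).intervalIntegrable _ _
  have hsplit : (∫ s in (0:ℝ)..t,
      (regDrift k ε' (Y ε' s) - regDrift k ε (Y ε s) - a * (Y ε' s - Y ε s))) =
      (∫ s in (0:ℝ)..t, regDrift k ε' (Y ε' s)) - (∫ s in (0:ℝ)..t, regDrift k ε (Y ε s))
        - a * ((∫ s in (0:ℝ)..t, Y ε' s) - ∫ s in (0:ℝ)..t, Y ε s) := by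
    rw [intervalIntegral.integral_sub ((hdrift ε' hε').sub (hdrift ε hε))
        (((hY ε' hε').sub (hY ε hε)).const_mul a),
      intervalIntegral.integral_sub (hdrift ε' hε') (hdrift ε hε),
      intervalIntegral.integral_const_mul,
      intervalIntegral.integral_sub (hY ε' hε') (hY ε hε)]
  rw [hsplit, hYeq ε' hε' t ht, hYeq ε hε t ht]
  ring

theorem regularized_le_of_lt (hk : 0 < k) (hYc : ∀ ε : ℝ, 0 < ε → Continuous (Y ε))
    (hYeq : SolvesRegularized Y₀ k a σ g Y)
    {ε ε' : ℝ} (hε' : 0 < ε') (hε'ε : ε' < ε) {t : ℝ} (ht : 0 ≤ t) : Y ε t ≤ Y ε' t := by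
  have hε : 0 < ε := hε'.trans hε'ε
  refine le_of_sub_eq_integral_of_pos ?_ (fun t ht => sub_eq_integral_regDrift hYc hYeq hε hε' ht)
    (fun s _ hs => ?_) ht
  · exact (((continuous_regDrift k hε').comp (hYc ε' hε')).sub
      ((continuous_regDrift k hε).comp (hYc ε hε))).sub
      (((hYc ε' hε').sub (hYc ε hε)).const_mul a)
  · rw [hs, sub_self, mul_zero, sub_zero, sub_pos]
    exact regDrift_lt_regDrift hk hε' hε'ε _

theorem regularized_le_lim (hk : 0 < k) (hYc : ∀ ε : ℝ, 0 < ε → Continuous (Y ε))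
    (hYeq : SolvesRegularized Y₀ k a σ g Y)
    {Ylim : ℝ → ℝ} {t : ℝ} (ht : 0 ≤ t) (hlim : Tendsto (fun ε => Y ε t) (𝓝[>] 0) (𝓝 (Ylim t)))
    {ε : ℝ} (hε : 0 < ε) : Y ε t ≤ Ylim t :=
  ge_of_tendsto hlim <| eventually_of_mem (Ioo_mem_nhdsGT hε) fun _ hε' =>
    regularized_le_of_lt hk hYc hYeq hε'.1 hε'.2 ht

end Regularized

theorem positivity_set_isOpen_general
    (Y₀ k a σ : ℝ) (hk : 0 < k)
    (g : ℝ → ℝ)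
    (Y : ℝ → ℝ → ℝ) (Ylim : ℝ → ℝ)
    (hYc : ∀ ε : ℝ, 0 < ε → Continuous (Y ε))
    (hYeq : ∀ ε : ℝ, 0 < ε → ∀ t : ℝ, 0 ≤ t →
      Y ε t = Y₀ + (∫ s in (0:ℝ)..t, k / ((if 0 < Y ε s then Y ε s else 0) + ε))
        - a * (∫ s in (0:ℝ)..t, Y ε s) + σ * g t)
    (hlim : ∀ t : ℝ, 0 ≤ t →
      Tendsto (fun ε => Y ε t) (𝓝[>] 0) (𝓝 (Ylim t))) :
    IsOpen {t : ℝ | 0 < t ∧ 0 < Ylim t} := by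
  have hunion : {t : ℝ | 0 < t ∧ 0 < Ylim t} = ⋃ ε ∈ Ioi (0 : ℝ), Ioi 0 ∩ Y ε ⁻¹' Ioi 0 := by
    ext t
    simp only [mem_ofPred_eq, mem_iUnion, mem_inter_iff, mem_Ioi, mem_preimage, exists_prop]
    constructor
    · rintro ⟨ht, hYt⟩
      obtain ⟨ε, hεt, hε⟩ :=
        (((hlim t ht.le).eventually (eventually_gt_nhds hYt)).and self_mem_nhdsWithin).exists
      exact ⟨ε, hε, ht, hεt⟩
    · rintro ⟨ε, hε, ht, hεt⟩
      exact ⟨ht, hεt.trans_le (regularized_le_lim hk hYc hYeq ht.le (hlim t ht.le) hε)⟩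
  rw [hunion]
  exact isOpen_biUnion fun ε hε => isOpen_Ioi.inter (isOpen_Ioi.preimage (hYc ε hε))

/-- Part 1 of Theorem 3: the positivity set of the limit process Y is open. -/
theorem positivity_set_isOpen
    (Y₀ k a σ : ℝ) (hY₀ : 0 < Y₀) (hk : 0 < k) (ha : 0 < a) (hσ : 0 < σ)
    (g : ℝ → ℝ) (hg : Continuous g) (hg0 : g 0 = 0)
    (Y : ℝ → ℝ → ℝ) (Ylim : ℝ → ℝ)
    (hYc : ∀ ε : ℝ, 0 < ε → Continuous (Y ε))
    (hYeq : ∀ ε : ℝ, 0 < ε → ∀ t : ℝ, 0 ≤ t →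
      Y ε t = Y₀ + (∫ s in (0:ℝ)..t, k / ((if 0 < Y ε s then Y ε s else 0) + ε))
        - a * (∫ s in (0:ℝ)..t, Y ε s) + σ * g t)
    (hlim : ∀ t : ℝ, 0 ≤ t →
      Tendsto (fun ε => Y ε t) (𝓝[>] 0) (𝓝 (Ylim t))) :
    IsOpen {t : ℝ | 0 < t ∧ 0 < Ylim t} :=
  positivity_set_isOpen_general Y₀ k a σ hk g Y Ylim hYc hYeq hlim
end

section
/- Let $(\alpha,\beta)$ be a connected component of the open set $\{t>0 : Y(t)>0\}$, where $Y$ is the finite pointwise limit of the pathwise $\varepsilon$-approximations driven by a path $g$ which is locally H\"older continuous of order $H/2$ for some $H\in(0,1/2)$. Then $\lim_{t\to\alpha+} Y(t) = 0$ and $\lim_{t\to\beta-} Y(t) = 0$. -/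
/-!
Suppose `Y` does not tend to `0` at an endpoint `e` of the component, say `Y ≥ x > 0` at points
`τ` arbitrarily close to `e`, while `Y e ≤ 0`. Passing to the approximations, for some `ε` the
continuous path `Y_ε` is below `x / 4` at `e` and above `x / 2` at `τ`, so between `e` and `τ` it
crosses the band `[x / 4, x / 2]` on an interval on which it stays inside the band. There the drift
`k / (Y_ε⁺ + ε) - a Y_ε` is bounded by `4 |k| / x + |a| x / 2`, so the crossing costs
`x / 4 ≤ (4 |k| / x + |a| x / 2) δ + |σ| C δ ^ (H / 2)` with `δ = |τ - e|` and `C` a Hölder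
constant of `g`, which is impossible for small `δ`.
-/

open Filter Topology MeasureTheory Set
open scoped Interval

theorem exists_Icc_crossing_up {f : ℝ → ℝ} (hf : Continuous f) {p q c₁ c₂ : ℝ} (hpq : p ≤ q)
    (hc : c₁ ≤ c₂) (hp : f p ≤ c₁) (hq : c₂ ≤ f q) :
    ∃ u v, p ≤ u ∧ u ≤ v ∧ v ≤ q ∧ f u = c₁ ∧ f v = c₂ ∧ MapsTo f (Icc u v) (Icc c₁ c₂) := by
  -- `u`: last time before `q` with `f ≤ c₁`; `v`: first time after `u` with `f ≥ c₂`
  set S := Icc p q ∩ f ⁻¹' Iic c₁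
  have hS : BddAbove S := bddAbove_Icc.mono inter_subset_left
  obtain ⟨⟨hpu, huq⟩, hfu⟩ : sSup S ∈ S :=
    (isClosed_Icc.inter (isClosed_Iic.preimage hf)).csSup_mem ⟨p, ⟨le_rfl, hpq⟩, hp⟩ hS
  set u := sSup S
  have hfu : f u = c₁ := by
    obtain ⟨w, ⟨huw, hwq⟩, hfw⟩ :=
      intermediate_value_Icc huq hf.continuousOn ⟨hfu, hc.trans hq⟩
    rwa [le_antisymm (le_csSup hS ⟨⟨hpu.trans huw, hwq⟩, hfw.le⟩) huw] at hfw
  set T := Icc u q ∩ f ⁻¹' Ici c₂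
  have hT : BddBelow T := bddBelow_Icc.mono inter_subset_left
  obtain ⟨⟨huv, hvq⟩, hfv⟩ : sInf T ∈ T :=
    (isClosed_Icc.inter (isClosed_Ici.preimage hf)).csInf_mem ⟨q, ⟨huq, le_rfl⟩, hq⟩ hT
  set v := sInf T
  have hfv : f v = c₂ := by
    obtain ⟨w, ⟨huw, hwv⟩, hfw⟩ :=
      intermediate_value_Icc huv hf.continuousOn ⟨hfu ▸ hc, hfv⟩
    rwa [le_antisymm hwv (csInf_le hT ⟨⟨huw, hwv.trans hvq⟩, hfw.ge⟩)] at hfw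
  refine ⟨u, v, hpu, huv, hvq, hfu, hfv, fun w hw => ⟨?_, ?_⟩⟩
  · by_contra! hw₁
    have hwu : w ≤ u := le_csSup hS ⟨⟨hpu.trans hw.1, hw.2.trans hvq⟩, hw₁.le⟩
    rw [le_antisymm hwu hw.1, hfu] at hw₁
    exact hw₁.false
  · by_contra! hw₂
    have hvw : v ≤ w := csInf_le hT ⟨⟨hw.1, hw.2.trans hvq⟩, hw₂.le⟩
    rw [le_antisymm hw.2 hvw, hfv] at hw₂
    exact hw₂.false

theorem exists_Icc_crossing {f : ℝ → ℝ} (hf : Continuous f) {p q m M : ℝ} (hmM : m ≤ M)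
    (hp : f p ≤ m) (hq : M ≤ f q) :
    ∃ u v, u ≤ v ∧ Icc u v ⊆ uIcc p q ∧ MapsTo f (Icc u v) (Icc m M) ∧ |f v - f u| = M - m := by
  rcases le_total p q with hpq | hqp
  · obtain ⟨u, v, hpu, huv, hvq, hfu, hfv, hmaps⟩ := exists_Icc_crossing_up hf hpq hmM hp hq
    refine ⟨u, v, huv, ?_, hmaps, by rw [hfu, hfv, abs_of_nonneg (sub_nonneg.2 hmM)]⟩
    rw [uIcc_of_le hpq]
    exact Icc_subset_Icc hpu hvq
  · obtain ⟨u, v, hqu, huv, hvp, hfu, hfv, hmaps⟩ :=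
      exists_Icc_crossing_up hf.neg hqp (neg_le_neg hmM) (neg_le_neg hq) (neg_le_neg hp)
    refine ⟨u, v, huv, ?_, fun w hw => ?_, ?_⟩
    · rw [uIcc_of_ge hqp]
      exact Icc_subset_Icc hqu hvp
    · obtain ⟨h₁, h₂⟩ := hmaps hw
      exact ⟨le_of_neg_le_neg h₂, le_of_neg_le_neg h₁⟩
    · simp only [Pi.neg_apply, neg_inj] at hfu hfv
      rw [hfu, hfv, abs_sub_comm, abs_of_nonneg (sub_nonneg.2 hmM)]

theorem nonpos_of_forall_exists_le_mul_add_mul_rpow {x c D r : ℝ} (hr : 0 < r)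
    (h : ∀ δ > 0, ∃ d ∈ Icc 0 δ, x ≤ c * d + D * d ^ r) : x ≤ 0 := by
  have hcont : ContinuousAt (fun d : ℝ => c * d + D * d ^ r) 0 :=
    (continuousAt_const.mul continuousAt_id).add
      (continuousAt_const.mul (Real.continuousAt_rpow_const 0 r (Or.inr hr.le)))
  by_contra! hx
  obtain ⟨δ, hδ, hsmall⟩ := Metric.continuousAt_iff.mp hcont x hx
  obtain ⟨d, ⟨hd₀, hdδ⟩, hxd⟩ := h (δ / 2) (by positivity)
  have hd : dist d 0 < δ := by
    rw [Real.dist_0_eq_abs, abs_of_nonneg hd₀]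
    linarith
  have := hsmall hd
  rw [Real.dist_eq, Real.zero_rpow hr.ne', mul_zero, mul_zero, add_zero, sub_zero] at this
  linarith [le_abs_self (c * d + D * d ^ r)]

theorem continuous_div_posPart_add {k ε : ℝ} {y : ℝ → ℝ} (hε : 0 < ε) (hy : Continuous y) :
    Continuous fun s => k / ((if 0 < y s then y s else 0) + ε) := by
  have hmax : ∀ s, (if 0 < y s then y s else 0) = max (y s) 0 := fun s => by
    split_ifs with h
    · exact (max_eq_left h.le).symm
    · exact (max_eq_right (not_lt.1 h)).symm
  refine continuous_const.div ?_ fun s => ?_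
  · simp only [hmax]
    fun_prop
  · split_ifs with h <;> positivity

def IsPathwiseApprox (Y₀ k a σ ε : ℝ) (g y : ℝ → ℝ) : Prop :=
  ∀ t, 0 ≤ t →
    y t = Y₀ + (∫ s in (0:ℝ)..t, k / ((if 0 < y s then y s else 0) + ε))
      - a * (∫ s in (0:ℝ)..t, y s) + σ * g t

namespace IsPathwiseApprox

variable {Y₀ k a σ ε : ℝ} {g y : ℝ → ℝ}

theorem sub_sub_noise_eq (h : IsPathwiseApprox Y₀ k a σ ε g y) (hε : 0 < ε) (hy : Continuous y)
    {s t : ℝ} (hs : 0 ≤ s) (ht : 0 ≤ t) :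
    y t - y s - σ * (g t - g s) =
      (∫ u in s..t, k / ((if 0 < y u then y u else 0) + ε)) - a * ∫ u in s..t, y u := by
  have hF := continuous_div_posPart_add (k := k) hε hy
  rw [h t ht, h s hs, ← intervalIntegral.integral_interval_sub_left (hF.intervalIntegrable 0 t)
    (hF.intervalIntegrable 0 s), ← intervalIntegral.integral_interval_sub_left
    (hy.intervalIntegrable 0 t) (hy.intervalIntegrable 0 s)]
  ring

theorem abs_sub_sub_noise_le (h : IsPathwiseApprox Y₀ k a σ ε g y) (hε : 0 < ε)
    (hy : Continuous y) {s t m M : ℝ} (hs : 0 ≤ s) (hst : s ≤ t) (hm : 0 < m)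
    (hmaps : MapsTo y (Icc s t) (Icc m M)) :
    |y t - y s - σ * (g t - g s)| ≤ (|k| / m + |a| * M) * (t - s) := by
  have hband : ∀ u ∈ Ι s t, m ≤ y u ∧ y u ≤ M := fun u hu =>
    hmaps (Ioc_subset_Icc_self (by rwa [uIoc_of_le hst] at hu))
  have hdrift : |∫ u in s..t, k / ((if 0 < y u then y u else 0) + ε)| ≤ |k| / m * (t - s) := by
    rw [← abs_of_nonneg (sub_nonneg.2 hst)]
    refine (Real.norm_eq_abs _).symm.trans_le
      (intervalIntegral.norm_integral_le_of_norm_le_const fun u hu => ?_)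
    obtain ⟨hmu, -⟩ := hband u hu
    rw [if_pos (hm.trans_le hmu), Real.norm_eq_abs, abs_div,
      abs_of_pos (show 0 < y u + ε by linarith)]
    exact div_le_div_of_nonneg_left (abs_nonneg k) hm (by linarith)
  have hmean : |∫ u in s..t, y u| ≤ M * (t - s) := by
    rw [← abs_of_nonneg (sub_nonneg.2 hst)]
    refine (Real.norm_eq_abs _).symm.trans_le
      (intervalIntegral.norm_integral_le_of_norm_le_const fun u hu => ?_)
    obtain ⟨hmu, huM⟩ := hband u hu
    rwa [Real.norm_eq_abs, abs_of_pos (hm.trans_le hmu)]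
  calc |y t - y s - σ * (g t - g s)|
      = |(∫ u in s..t, k / ((if 0 < y u then y u else 0) + ε)) - a * ∫ u in s..t, y u| := by
        rw [h.sub_sub_noise_eq hε hy hs (hs.trans hst)]
    _ ≤ |∫ u in s..t, k / ((if 0 < y u then y u else 0) + ε)| + |a| * |∫ u in s..t, y u| := by
        rw [← abs_mul]
        exact abs_sub _ _
    _ ≤ |k| / m * (t - s) + |a| * (M * (t - s)) := by gcongr
    _ = (|k| / m + |a| * M) * (t - s) := by ring

theorem sub_le_of_crossing (h : IsPathwiseApprox Y₀ k a σ ε g y) (hε : 0 < ε)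
    (hy : Continuous y) {T C r p q m M : ℝ} (hr : 0 ≤ r) (hC : 0 ≤ C)
    (hg : ∀ s t, 0 ≤ s → s ≤ t → t ≤ T → |g t - g s| ≤ C * (t - s) ^ r)
    (hp : p ∈ Icc 0 T) (hq : q ∈ Icc 0 T) (hm : 0 < m) (hmM : m ≤ M)
    (hyp : y p ≤ m) (hyq : M ≤ y q) :
    M - m ≤ (|k| / m + |a| * M) * |q - p| + |σ| * C * |q - p| ^ r := by
  obtain ⟨u, v, huv, hsub, hmaps, hjump⟩ := exists_Icc_crossing hy hmM hyp hyq
  have hu := hsub ⟨le_rfl, huv⟩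
  have hv := hsub ⟨huv, le_rfl⟩
  have hu₀ : u ∈ Icc 0 T := uIcc_subset_Icc hp hq hu
  have hvT : v ∈ Icc 0 T := uIcc_subset_Icc hp hq hv
  have hvu : v - u ≤ |q - p| := by
    simpa only [abs_of_nonneg (sub_nonneg.2 huv)] using abs_sub_le_of_uIcc_subset_uIcc
      (uIcc_subset_uIcc hu hv)
  calc M - m = |y v - y u| := hjump.symm
    _ ≤ |y v - y u - σ * (g v - g u)| + |σ| * |g v - g u| := by
        rw [← abs_mul]
        linarith [abs_sub_abs_le_abs_sub (y v - y u) (σ * (g v - g u))]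
    _ ≤ (|k| / m + |a| * M) * (v - u) + |σ| * (C * (v - u) ^ r) := by
        gcongr
        · exact h.abs_sub_sub_noise_le hε hy hu₀.1 huv hm hmaps
        · exact hg u v hu₀.1 huv hvT.2
    _ ≤ (|k| / m + |a| * M) * |q - p| + |σ| * C * |q - p| ^ r := by
        have hK : 0 ≤ |k| / m + |a| * M :=
          add_nonneg (div_nonneg (abs_nonneg k) hm.le) (mul_nonneg (abs_nonneg a) (hm.le.trans hmM))
        rw [mul_assoc |σ|]
        gcongr

end IsPathwiseApprox

theorem tendsto_nhds_zero_of_pathwiseApprox {Y₀ k a σ : ℝ} {g : ℝ → ℝ} {Y : ℝ → ℝ → ℝ}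
    {Ylim : ℝ → ℝ} {T C r e : ℝ} {l : Filter ℝ} (hr : 0 < r) (hC : 0 ≤ C)
    (hg : ∀ s t, 0 ≤ s → s ≤ t → t ≤ T → |g t - g s| ≤ C * (t - s) ^ r)
    (hYc : ∀ ε, 0 < ε → Continuous (Y ε))
    (hY : ∀ ε, 0 < ε → IsPathwiseApprox Y₀ k a σ ε g (Y ε))
    (hlim : ∀ t, 0 ≤ t → Tendsto (fun ε => Y ε t) (𝓝[>] 0) (𝓝 (Ylim t)))
    (he : e ∈ Icc 0 T) (hYe : Ylim e ≤ 0) (hle : l ≤ 𝓝 e)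
    (hl : ∀ᶠ t in l, t ∈ Icc 0 T ∧ 0 < Ylim t) : Tendsto Ylim l (𝓝 0) := by
  refine Metric.tendsto_nhds.2 fun x hx => ?_
  by_contra hfar
  rw [not_eventually] at hfar
  suffices x / 2 - x / 4 ≤ 0 by linarith
  refine nonpos_of_forall_exists_le_mul_add_mul_rpow (c := |k| / (x / 4) + |a| * (x / 2))
    (D := |σ| * C) hr fun δ hδ => ?_
  obtain ⟨τ, hτx, ⟨hτT, hτpos⟩, hτe⟩ :=
    (hfar.and_eventually (hl.and (hle (Metric.ball_mem_nhds e hδ)))).exists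
  have hxτ : x ≤ Ylim τ := by
    rwa [not_lt, Real.dist_0_eq_abs, abs_of_pos hτpos] at hτx
  obtain ⟨ε, ⟨hεe, hετ⟩, hε⟩ := ((hlim e he.1).eventually_lt_const (by linarith : Ylim e < x / 4)
    |>.and ((hlim τ hτT.1).eventually_const_lt (by linarith : x / 2 < Ylim τ))
    |>.and self_mem_nhdsWithin).exists
  refine ⟨|τ - e|, ⟨abs_nonneg _, (Metric.mem_ball.1 hτe).le⟩, ?_⟩
  exact (hY ε hε).sub_le_of_crossing hε (hYc ε hε) hr.le hC hg he hτT (by positivity)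
    (by linarith) hεe.le hετ.le

theorem limit_process_vanishes_at_component_endpoints_general
    (Y₀ k a σ H : ℝ)
    (hH : 0 < H)
    (g : ℝ → ℝ)
    (hHolder : ∀ T : ℝ, 0 < T → ∃ C : ℝ, 0 < C ∧
      ∀ s t : ℝ, 0 ≤ s → s ≤ t → t ≤ T → |g t - g s| ≤ C * (t - s) ^ (H / 2))
    (Y : ℝ → ℝ → ℝ) (Ylim : ℝ → ℝ)
    (hYc : ∀ ε : ℝ, 0 < ε → Continuous (Y ε))
    (hYeq : ∀ ε : ℝ, 0 < ε → ∀ t : ℝ, 0 ≤ t →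
      Y ε t = Y₀ + (∫ s in (0:ℝ)..t, k / ((if 0 < Y ε s then Y ε s else 0) + ε))
        - a * (∫ s in (0:ℝ)..t, Y ε s) + σ * g t)
    (hlim : ∀ t : ℝ, 0 ≤ t →
      Tendsto (fun ε => Y ε t) (𝓝[>] 0) (𝓝 (Ylim t)))
    (α β : ℝ) (hα : 0 ≤ α) (hαβ : α < β)
    (hpos : ∀ t ∈ Set.Ioo α β, 0 < Ylim t)
    (hαend : Ylim α ≤ 0) (hβend : Ylim β ≤ 0) :
    Tendsto Ylim (𝓝[>] α) (𝓝 0) ∧ Tendsto Ylim (𝓝[<] β) (𝓝 0) := by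
  obtain ⟨C, hC, hgC⟩ := hHolder β (hα.trans_lt hαβ)
  have hinside : ∀ t ∈ Ioo α β, t ∈ Icc 0 β ∧ 0 < Ylim t := fun t ht =>
    ⟨⟨hα.trans ht.1.le, ht.2.le⟩, hpos t ht⟩
  constructor
  · exact tendsto_nhds_zero_of_pathwiseApprox (by positivity) hC.le hgC hYc hYeq hlim
      ⟨hα, hαβ.le⟩ hαend nhdsWithin_le_nhds (eventually_of_mem (Ioo_mem_nhdsGT hαβ) hinside)
  · exact tendsto_nhds_zero_of_pathwiseApprox (by positivity) hC.le hgC hYc hYeq hlim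
      ⟨(hα.trans_lt hαβ).le, le_rfl⟩ hβend nhdsWithin_le_nhds
      (eventually_of_mem (Ioo_mem_nhdsLT hαβ) hinside)

/-- Part 1 of Theorem 4: at the endpoints of any connected component (α, β) of
the positivity set, the limit process Y tends to zero. -/
theorem limit_process_vanishes_at_component_endpoints
    (Y₀ k a σ H : ℝ) (hY₀ : 0 < Y₀) (hk : 0 < k) (ha : 0 < a) (hσ : 0 < σ)
    (hH : 0 < H) (hH' : H < 1/2)
    (g : ℝ → ℝ) (hg : Continuous g) (hg0 : g 0 = 0)
    (hHolder : ∀ T : ℝ, 0 < T → ∃ C : ℝ, 0 < C ∧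
      ∀ s t : ℝ, 0 ≤ s → s ≤ t → t ≤ T → |g t - g s| ≤ C * (t - s) ^ (H / 2))
    (Y : ℝ → ℝ → ℝ) (Ylim : ℝ → ℝ)
    (hYc : ∀ ε : ℝ, 0 < ε → Continuous (Y ε))
    (hYeq : ∀ ε : ℝ, 0 < ε → ∀ t : ℝ, 0 ≤ t →
      Y ε t = Y₀ + (∫ s in (0:ℝ)..t, k / ((if 0 < Y ε s then Y ε s else 0) + ε))
        - a * (∫ s in (0:ℝ)..t, Y ε s) + σ * g t)
    (hlim : ∀ t : ℝ, 0 ≤ t →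
      Tendsto (fun ε => Y ε t) (𝓝[>] 0) (𝓝 (Ylim t)))
    (α β : ℝ) (hα : 0 ≤ α) (hαβ : α < β)
    (hpos : ∀ t ∈ Set.Ioo α β, 0 < Ylim t)
    (hαend : Ylim α ≤ 0) (hβend : Ylim β ≤ 0) :
    Tendsto Ylim (𝓝[>] α) (𝓝 0) ∧ Tendsto Ylim (𝓝[<] β) (𝓝 0) :=
  limit_process_vanishes_at_component_endpoints_general Y₀ k a σ H hH g hHolder Y Ylim hYc hYeq hlim
    α β hα hαβ hpos hαend hβend
end

section
/- Let $(\alpha,\beta)$ be a connected component of $\{t>0: Y(t)>0\}$ for the limit process $Y$ of the pathwise $\varepsilon$-approximations driven by a continuous path $g$. Then for every $t\in[\alpha,\beta]$, $Y(t) = \int_\alpha^t \frac{k}{Y(s)}\,ds - a\int_\alpha^t Y(s)\,ds + \sigma(g(t)-g(\alpha))$. -/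
/-!
The approximations `Y ε` are compared pathwise: all of them see the same noise `h = σ g`, and the
drift `k / (y⁺ + ε) - a y` is antitone in `y` and in `ε`, so `Y ε` decreases as `ε` grows and
`Y ε ↑ Ylim`; the drift is negative above `max Y₀ 1 (k / a)`, which bounds all `Y ε` on compacts.
On a compact subinterval of `(α, β)` a compactness (Dini) argument gives a lower bound `m > 0` for
`Y ε`, `ε` small, so dominated convergence passes to the limit in the equation for the increments.
Below `0` the drift is at least `k / ε`, which forces `Ylim ≥ 0`, hence `Ylim α = Ylim β = 0`; the
drift bounds `2 k / c` above `c / 2` and `-a B` below `B` make `Ylim` continuous at `α` and `β`.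
Then `Ylim + a ∫ Ylim - σ g` is an antiderivative of `k / Ylim ≥ 0` on `(α, β)` that is continuous
on `[α, β]`, so `k / Ylim` is integrable up to the endpoints and the equation holds on `[α, β]`.
-/

open Filter Topology MeasureTheory Set

theorem exists_last_le {f : ℝ → ℝ} {a b c : ℝ} (hf : ContinuousOn f (Icc a b)) (hab : a ≤ b)
    (ha : f a ≤ c) : ∃ s ∈ Icc a b, f s ≤ c ∧ ∀ u ∈ Ioc s b, c < f u := by
  set S := Icc a b ∩ f ⁻¹' Iic c
  have hbdd : BddAbove S := ⟨b, fun x hx => hx.1.2⟩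
  have hmem : sSup S ∈ S :=
    (hf.preimage_isClosed_of_isClosed isClosed_Icc isClosed_Iic).csSup_mem
      ⟨a, ⟨le_rfl, hab⟩, ha⟩ hbdd
  refine ⟨sSup S, hmem.1, hmem.2, fun u hu => lt_of_not_ge fun hle => ?_⟩
  exact hu.1.not_ge (le_csSup hbdd ⟨⟨hmem.1.1.trans hu.1.le, hu.2⟩, hle⟩)

theorem tendsto_one_div_add_one_nhdsGT_zero :
    Tendsto (fun n : ℕ => 1 / ((n : ℝ) + 1)) atTop (𝓝[>] 0) :=
  tendsto_nhdsWithin_iff.2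
    ⟨tendsto_one_div_add_atTop_nhds_zero_nat,
      Eventually.of_forall fun n => mem_Ioi.2 (by positivity)⟩

theorem aestronglyMeasurable_of_tendsto_nhdsGT {X : Type*} [TopologicalSpace X]
    [MeasurableSpace X] [OpensMeasurableSpace X] {μ : Measure X} {S : Set X}
    {Y : ℝ → X → ℝ} {L : X → ℝ} (hS : MeasurableSet S) (hYc : ∀ ε, 0 < ε → Continuous (Y ε))
    (hlim : ∀ x ∈ S, Tendsto (fun ε => Y ε x) (𝓝[>] 0) (𝓝 (L x))) :
    AEStronglyMeasurable L (μ.restrict S) :=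
  aestronglyMeasurable_of_tendsto_ae atTop
    (fun n => (hYc _ (by positivity)).aestronglyMeasurable)
    ((ae_restrict_iff' hS).2 (ae_of_all _ fun x hx =>
      (hlim x hx).comp tendsto_one_div_add_one_nhdsGT_zero))

theorem exists_pos_le_of_antitone_of_tendsto {X : Type*} [TopologicalSpace X] {K : Set X}
    (hK : IsCompact K) {Y : ℝ → X → ℝ} {L : X → ℝ} (hYc : ∀ ε, 0 < ε → Continuous (Y ε))
    (hanti : ∀ ε₁ ε₂, 0 < ε₁ → ε₁ ≤ ε₂ → ∀ x ∈ K, Y ε₂ x ≤ Y ε₁ x)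
    (hlim : ∀ x ∈ K, Tendsto (fun ε => Y ε x) (𝓝[>] 0) (𝓝 (L x)))
    (hpos : ∀ x ∈ K, 0 < L x) :
    ∃ ε₀ > 0, ∃ m > 0, ∀ ε ∈ Ioc 0 ε₀, ∀ x ∈ K, m ≤ Y ε x := by
  set e : ℕ → ℝ := fun n => 1 / ((n : ℝ) + 1)
  have he : ∀ n, 0 < e n := fun n => by positivity
  have he_anti : Antitone e := fun n₁ n₂ h => one_div_le_one_div_of_le (by positivity)
    (by gcongr)
  obtain ⟨n, hn⟩ : ∃ n, K ⊆ accumulate (fun n => {x | 0 < Y (e n) x}) n := by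
    refine hK.elim_directed_cover _ (fun n => isOpen_biUnion fun i _ =>
      isOpen_lt continuous_const (hYc _ (he i))) (fun x hx => ?_)
      directed_accumulate
    obtain ⟨n, hn⟩ := (((hlim x hx).comp tendsto_one_div_add_one_nhdsGT_zero).eventually
      (lt_mem_nhds (hpos x hx))).exists
    rw [iUnion_accumulate]
    exact mem_iUnion.2 ⟨n, hn⟩
  have hpos_n : ∀ x ∈ K, 0 < Y (e n) x := fun x hx => by
    obtain ⟨i, hin, hi⟩ := mem_accumulate.1 (hn hx)
    exact hi.trans_le (hanti _ _ (he n) (he_anti hin) x hx)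
  obtain ⟨m, hm, hmY⟩ := hK.exists_forall_le' (hYc _ (he n)).continuousOn hpos_n
  exact ⟨e n, he n, m, hm, fun ε hε x hx => (hmY x hx).trans (hanti _ _ hε.1 hε.2 x hx)⟩

theorem intervalIntegrable_of_nonneg_of_integral_eq_sub {f Φ : ℝ → ℝ} {a b : ℝ} (hab : a < b)
    (hf : ∀ x ∈ Ioo a b, 0 ≤ f x)
    (hint : ∀ s t, a < s → s ≤ t → t < b → IntervalIntegrable f volume s t)
    (heq : ∀ s t, a < s → s ≤ t → t < b → ∫ x in s..t, f x = Φ t - Φ s)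
    (ha : ContinuousWithinAt Φ (Icc a b) a) (hb : ContinuousWithinAt Φ (Icc a b) b) :
    IntervalIntegrable f volume a b := by
  obtain ⟨u, -, hu, hua⟩ := exists_seq_strictAnti_tendsto' (left_lt_add_div_two.2 hab)
  obtain ⟨v, -, hv, hvb⟩ := exists_seq_strictMono_tendsto' (add_div_two_lt_right.2 hab)
  have hau : ∀ n, a < u n := fun n => (hu n).1
  have huv : ∀ n, u n ≤ v n := fun n => ((hu n).2.trans (hv n).1).le
  have hvb' : ∀ n, v n < b := fun n => (hv n).2
  have hΦ : Tendsto (fun n => Φ (v n) - Φ (u n)) atTop (𝓝 (Φ b - Φ a)) :=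
    (hb.tendsto.comp (tendsto_nhdsWithin_iff.2 ⟨hvb, Eventually.of_forall fun n =>
      ⟨(hau n).le.trans (huv n), (hvb' n).le⟩⟩)).sub
    (ha.tendsto.comp (tendsto_nhdsWithin_iff.2 ⟨hua, Eventually.of_forall fun n =>
      ⟨(hau n).le, (huv n).trans (hvb' n).le⟩⟩))
  rw [intervalIntegrable_iff_integrableOn_Ioc_of_le hab.le]
  refine integrableOn_Ioc_of_intervalIntegral_norm_bounded (I := Φ b - Φ a + 1) (fun n =>
    (intervalIntegrable_iff_integrableOn_Ioc_of_le (huv n)).1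
      (hint _ _ (hau n) (huv n) (hvb' n))) hua hvb
    ((hΦ.eventually (gt_mem_nhds (lt_add_one _))).mono fun n hn => ?_)
  have hnorm : ∫ x in Ioc (u n) (v n), ‖f x‖ = ∫ x in u n..v n, f x := by
    rw [intervalIntegral.integral_of_le (huv n)]
    exact setIntegral_congr_fun measurableSet_Ioc fun x hx =>
      Real.norm_of_nonneg (hf x ⟨(hau n).trans hx.1, hx.2.trans_lt (hvb' n)⟩)
  rw [hnorm, heq _ _ (hau n) (huv n) (hvb' n)]
  exact hn.le

theorem integral_eq_sub_of_forall_Ioo {f Φ : ℝ → ℝ} {a b : ℝ} (hab : a < b)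
    (hf : IntervalIntegrable f volume a b)
    (heq : ∀ s t, a < s → s ≤ t → t < b → ∫ x in s..t, f x = Φ t - Φ s)
    (ha : ContinuousWithinAt Φ (Icc a b) a) (hb : ContinuousWithinAt Φ (Icc a b) b)
    {t : ℝ} (ht : t ∈ Icc a b) : ∫ x in a..t, f x = Φ t - Φ a := by
  have hfa : ∀ x ∈ Icc a b, IntervalIntegrable f volume a x := fun x hx =>
    hf.mono_set (uIcc_subset_uIcc_left (by rwa [uIcc_of_le hab.le]))
  have hG : ContinuousOn (fun x => ∫ y in a..x, f y) (Icc a b) := by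
    simpa [uIcc_of_le hab.le] using
      intervalIntegral.continuousOn_primitive_interval' hf left_mem_uIcc
  set D : ℝ → ℝ := fun x => (∫ y in a..x, f y) - Φ x
  have hD : ∀ s t, a < s → s ≤ t → t < b → D s = D t := fun s t hs hst htb => by
    have := intervalIntegral.integral_interval_sub_left (hfa t ⟨hs.le.trans hst, htb.le⟩)
      (hfa s ⟨hs.le, hst.trans htb.le⟩)
    simp only [D]
    linarith [heq s t hs hst htb]
  have hDa : Tendsto D (𝓝[>] a) (𝓝 (D a)) :=
    ((hG a (left_mem_Icc.2 hab.le)).sub ha).mono_of_mem_nhdsWithin (Icc_mem_nhdsGT hab)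
  have hDb : Tendsto D (𝓝[<] b) (𝓝 (D b)) :=
    ((hG b (right_mem_Icc.2 hab.le)).sub hb).mono_of_mem_nhdsWithin (Icc_mem_nhdsLT hab)
  have hDIoo : ∀ x ∈ Ioo a b, D x = D a := fun x hx =>
    tendsto_nhds_unique tendsto_const_nhds (hDa.congr' (eventuallyEq_of_mem (Ioo_mem_nhdsGT hx.1)
      fun y hy => hD y x hy.1 hy.2.le hx.2))
  have hDt : D t = D a := by
    rcases ht.1.eq_or_lt with rfl | hat
    · rfl
    rcases ht.2.eq_or_lt with rfl | htb
    · exact tendsto_nhds_unique hDb (tendsto_const_nhds.congr' (eventuallyEq_of_mem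
        (Ioo_mem_nhdsLT hab) fun y hy => (hDIoo y hy).symm))
    · exact hDIoo t ⟨hat, htb⟩
  simp only [D, intervalIntegral.integral_same] at hDt
  linarith

def HasIncrements (X F h : ℝ → ℝ) (a : ℝ) : Prop :=
  ∀ s t, a ≤ s → s ≤ t → X t - X s = (∫ u in s..t, F u) + (h t - h s)

namespace HasIncrements

variable {X F h X' F' h' : ℝ → ℝ} {a : ℝ}

theorem mono (hX : HasIncrements X F h a) {b : ℝ} (hab : a ≤ b) : HasIncrements X F h b :=
  fun s t hs hst => hX s t (hab.trans hs) hst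

theorem neg (hX : HasIncrements X F h a) : HasIncrements (-X) (-F) (-h) a := fun s t hs hst => by
  simp only [Pi.neg_apply, intervalIntegral.integral_neg]
  linarith [hX s t hs hst]

theorem sub (hX : HasIncrements X F h a) (hX' : HasIncrements X' F' h' a) (hF : Continuous F)
    (hF' : Continuous F') : HasIncrements (X - X') (F - F') (h - h') a := fun s t hs hst => by
  simp only [Pi.sub_apply, intervalIntegral.integral_sub (hF.intervalIntegrable s t)
    (hF'.intervalIntegrable s t)]
  linarith [hX s t hs hst, hX' s t hs hst]

theorem sub_le (hX : HasIncrements X F h a) {s t K : ℝ} (hF : IntervalIntegrable F volume s t)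
    (hs : a ≤ s) (hst : s ≤ t) (hK : ∀ u ∈ Ioo s t, F u ≤ K) :
    X t - X s ≤ K * (t - s) + (h t - h s) := by
  have := intervalIntegral.integral_mono_on_of_le_Ioo hst hF intervalIntegrable_const hK
  rw [intervalIntegral.integral_const, smul_eq_mul] at this
  linarith [hX s t hs hst]

theorem exists_le_of_le_above (hX : HasIncrements X F h a) {t R K : ℝ}
    (hXc : ContinuousOn X (Icc a t)) (hF : IntervalIntegrable F volume a t) (hat : a ≤ t)
    (hXa : X a ≤ R) (hK : ∀ u ∈ Icc a t, R < X u → F u ≤ K) :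
    ∃ s ∈ Icc a t, X t ≤ R + K * (t - s) + (h t - h s) := by
  obtain ⟨s, hs, hXs, hafter⟩ := exists_last_le hXc hat hXa
  refine ⟨s, hs, ?_⟩
  have := hX.sub_le (hF.mono_set (uIcc_subset_uIcc_right (by rwa [uIcc_of_le hat])))
    hs.1 hs.2 fun u hu => hK u ⟨hs.1.trans hu.1.le, hu.2.le⟩ (hafter u ⟨hu.1, hu.2.le⟩)
  linarith

end HasIncrements

noncomputable def approxDrift (k a ε y : ℝ) : ℝ := k / (max y 0 + ε) - a * y

section approxDrift

variable {k a : ℝ}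

theorem continuous_approxDrift {ε : ℝ} (hε : 0 < ε) : Continuous (approxDrift k a ε) :=
  (continuous_const.div ((continuous_id.max continuous_const).add continuous_const)
    fun y => (add_pos_of_nonneg_of_pos (le_max_right y 0) hε).ne').sub
    (continuous_const.mul continuous_id)

theorem approxDrift_anti (hk : 0 ≤ k) (ha : 0 ≤ a) {ε₁ ε₂ y₁ y₂ : ℝ} (hε₁ : 0 < ε₁)
    (hε : ε₁ ≤ ε₂) (hy : y₁ ≤ y₂) : approxDrift k a ε₂ y₂ ≤ approxDrift k a ε₁ y₁ := by
  have : k / (max y₂ 0 + ε₂) ≤ k / (max y₁ 0 + ε₁) :=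
    div_le_div_of_nonneg_left hk (add_pos_of_nonneg_of_pos (le_max_right _ _) hε₁)
      (add_le_add (max_le_max_right 0 hy) hε)
  unfold approxDrift
  nlinarith

theorem approxDrift_le (hk : 0 ≤ k) (ha : 0 ≤ a) {ε c y : ℝ} (hε : 0 ≤ ε) (hc : 0 < c)
    (hy : c ≤ y) : approxDrift k a ε y ≤ k / c - a * c := by
  have : k / (max y 0 + ε) ≤ k / c :=
    div_le_div_of_nonneg_left hk hc (by linarith [le_max_left y 0])
  unfold approxDrift
  nlinarith

theorem div_le_approxDrift (ha : 0 ≤ a) {ε y : ℝ} (hy : y ≤ 0) :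
    k / ε ≤ approxDrift k a ε y := by
  simp only [approxDrift, max_eq_right hy, zero_add]
  nlinarith

theorem neg_mul_le_approxDrift (hk : 0 ≤ k) (ha : 0 ≤ a) {ε y B : ℝ} (hε : 0 ≤ ε)
    (hy : y ≤ B) : -(a * B) ≤ approxDrift k a ε y := by
  have : 0 ≤ k / (max y 0 + ε) := div_nonneg hk (by positivity)
  unfold approxDrift
  nlinarith

theorem abs_approxDrift_le (hk : 0 ≤ k) (ha : 0 ≤ a) {ε m y B : ℝ} (hε : 0 ≤ ε) (hm : 0 < m)
    (hmy : m ≤ y) (hyB : y ≤ B) : |approxDrift k a ε y| ≤ k / m + a * B := by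
  have h1 : 0 ≤ k / (max y 0 + ε) := div_nonneg hk (by positivity)
  have h2 : k / (max y 0 + ε) ≤ k / m :=
    div_le_div_of_nonneg_left hk hm (by linarith [le_max_left y 0])
  rw [approxDrift, abs_le]
  constructor <;> nlinarith

theorem tendsto_approxDrift {ι : Type*} {l : Filter ι} {e y : ι → ℝ} {y₀ : ℝ}
    (he : Tendsto e l (𝓝 0)) (hy : Tendsto y l (𝓝 y₀)) (hy₀ : 0 < y₀) :
    Tendsto (fun i => approxDrift k a (e i) (y i)) l (𝓝 (k / y₀ - a * y₀)) := by
  have : Tendsto (fun i => max (y i) 0 + e i) l (𝓝 (max y₀ 0 + 0)) :=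
    (hy.max tendsto_const_nhds).add he
  rw [max_eq_left hy₀.le, add_zero] at this
  exact (tendsto_const_nhds.div this hy₀.ne').sub (tendsto_const_nhds.mul hy)

end approxDrift

structure IsApproxFamily (k a y₀ : ℝ) (h : ℝ → ℝ) (Y : ℝ → ℝ → ℝ) : Prop where
  continuous : ∀ ε, 0 < ε → Continuous (Y ε)
  apply_zero : ∀ ε, 0 < ε → Y ε 0 = y₀
  hasIncrements : ∀ ε, 0 < ε → HasIncrements (Y ε) (fun u => approxDrift k a ε (Y ε u)) h 0

namespace IsApproxFamily

variable {k a y₀ : ℝ} {h : ℝ → ℝ} {Y : ℝ → ℝ → ℝ} {L : ℝ → ℝ}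

theorem of_integral_eq {σ : ℝ} {g : ℝ → ℝ} (hg0 : g 0 = 0)
    (hYc : ∀ ε : ℝ, 0 < ε → Continuous (Y ε))
    (hYeq : ∀ ε : ℝ, 0 < ε → ∀ t : ℝ, 0 ≤ t →
      Y ε t = y₀ + (∫ s in (0:ℝ)..t, k / ((if 0 < Y ε s then Y ε s else 0) + ε))
        - a * (∫ s in (0:ℝ)..t, Y ε s) + σ * g t) :
    IsApproxFamily k a y₀ (fun t => σ * g t) Y where
  continuous := hYc
  apply_zero ε hε := by simpa [hg0] using hYeq ε hε 0 le_rfl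
  hasIncrements ε hε s t hs hst := by
    have hmax : ∀ y : ℝ, (if 0 < y then y else 0) = max y 0 := fun y => by
      split_ifs with hy
      · exact (max_eq_left hy.le).symm
      · exact (max_eq_right (not_lt.1 hy)).symm
    simp only [hmax] at hYeq
    have hφ : Continuous fun u => k / (max (Y ε u) 0 + ε) :=
      continuous_const.div (((hYc ε hε).max continuous_const).add continuous_const)
        fun u => (add_pos_of_nonneg_of_pos (le_max_right _ _) hε).ne'
    have e1 := intervalIntegral.integral_interval_sub_left (hφ.intervalIntegrable (μ := volume) 0 t)
      (hφ.intervalIntegrable 0 s)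
    have e2 := intervalIntegral.integral_interval_sub_left
      ((hYc ε hε).intervalIntegrable (μ := volume) 0 t) ((hYc ε hε).intervalIntegrable 0 s)
    have e3 : ∫ u in s..t, approxDrift k a ε (Y ε u) =
        (∫ u in s..t, k / (max (Y ε u) 0 + ε)) - a * ∫ u in s..t, Y ε u := by
      rw [← intervalIntegral.integral_const_mul, ← intervalIntegral.integral_sub
        (hφ.intervalIntegrable s t) (((hYc ε hε).const_mul a).intervalIntegrable s t)]
      rfl
    rw [hYeq ε hε t (hs.trans hst), hYeq ε hε s hs, e3, ← e1, ← e2]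
    ring

theorem continuous_drift (hY : IsApproxFamily k a y₀ h Y) {ε : ℝ} (hε : 0 < ε) :
    Continuous fun u => approxDrift k a ε (Y ε u) :=
  (continuous_approxDrift hε).comp (hY.continuous ε hε)

theorem antitone (hY : IsApproxFamily k a y₀ h Y) (hk : 0 ≤ k) (ha : 0 ≤ a) {ε₁ ε₂ t : ℝ}
    (hε₁ : 0 < ε₁) (hε : ε₁ ≤ ε₂) (ht : 0 ≤ t) : Y ε₂ t ≤ Y ε₁ t := by
  have hε₂ : 0 < ε₂ := hε₁.trans_le hε
  obtain ⟨s, -, hs⟩ := ((hY.hasIncrements ε₂ hε₂).sub (hY.hasIncrements ε₁ hε₁)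
    (hY.continuous_drift hε₂) (hY.continuous_drift hε₁)).exists_le_of_le_above (R := 0) (K := 0)
    ((hY.continuous ε₂ hε₂).sub (hY.continuous ε₁ hε₁)).continuousOn
    (((hY.continuous_drift hε₂).sub (hY.continuous_drift hε₁)).intervalIntegrable _ _) ht
    (by simp [hY.apply_zero ε₁ hε₁, hY.apply_zero ε₂ hε₂])
    fun u _ hu => sub_nonpos.2 (approxDrift_anti hk ha hε₁ hε (sub_pos.1 hu).le)
  simpa using hs

theorem apply_le_of_tendsto (hY : IsApproxFamily k a y₀ h Y) (hk : 0 ≤ k) (ha : 0 ≤ a) {t l ε : ℝ}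
    (ht : 0 ≤ t) (hlim : Tendsto (fun ε => Y ε t) (𝓝[>] 0) (𝓝 l)) (hε : 0 < ε) : Y ε t ≤ l :=
  ge_of_tendsto hlim (eventually_of_mem (Ioc_mem_nhdsGT hε) fun _ hε' =>
    hY.antitone hk ha hε'.1 hε'.2 ht)

theorem exists_forall_le (hY : IsApproxFamily k a y₀ h Y) (hk : 0 ≤ k) (ha : 0 < a)
    (hh : Continuous h) (T : ℝ) : ∃ B, ∀ ε, 0 < ε → ∀ t ∈ Icc 0 T, Y ε t ≤ B := by
  obtain ⟨H, hH⟩ := isCompact_Icc.exists_bound_of_continuousOn (hh.continuousOn (s := Icc 0 T))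
  set R := max y₀ (max 1 (k / a))
  have hR : 1 ≤ R := (le_max_left _ _).trans (le_max_right _ _)
  have hkR : k / R - a * R ≤ 0 := by
    have : k ≤ a * R := by
      rw [← div_le_iff₀' ha]
      exact (le_max_right _ _).trans (le_max_right _ _)
    rw [sub_nonpos, div_le_iff₀ (by linarith)]
    nlinarith
  refine ⟨R + 2 * H, fun ε hε t ht => ?_⟩
  obtain ⟨s, hs, hYt⟩ := (hY.hasIncrements ε hε).exists_le_of_le_above (R := R) (K := 0)
    (hY.continuous ε hε).continuousOn ((hY.continuous_drift hε).intervalIntegrable _ _) ht.1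
    (by rw [hY.apply_zero ε hε]; exact le_max_left _ _)
    fun u _ hu => (approxDrift_le hk ha.le hε.le (by linarith) hu.le).trans hkR
  have h1 := hH t ht
  have h2 := hH s ⟨hs.1, hs.2.trans ht.2⟩
  rw [Real.norm_eq_abs, abs_le] at h1 h2
  linarith

theorem nonneg_of_tendsto (hY : IsApproxFamily k a y₀ h Y) (hy₀ : 0 ≤ y₀) (hk : 0 < k)
    (ha : 0 ≤ a) (hh : Continuous h) {τ l : ℝ} (hτ : 0 ≤ τ)
    (hlim : Tendsto (fun ε => Y ε τ) (𝓝[>] 0) (𝓝 l)) : 0 ≤ l := by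
  -- After the last time `s` with `Y ε s ≥ l / 2`, `Y ε < 0` rises at rate `≥ k / ε` yet falls by
  -- `-l / 2`, so `h` falls by more than that: impossible if `τ - s < η` by continuity of `h` at `τ`,
  -- and if `τ - s ≥ η` since `ε` is chosen so that the rise alone exceeds `2 H ≥ |h τ - h s|`.
  by_contra! hl
  obtain ⟨H, hH⟩ := isCompact_Icc.exists_bound_of_continuousOn (hh.continuousOn (s := Icc 0 τ))
  have hH0 : 0 ≤ H := (norm_nonneg _).trans (hH τ ⟨hτ, le_rfl⟩)
  obtain ⟨η, hη, hhη⟩ := Metric.continuousAt_iff.1 (hh.continuousAt (x := τ)) (-l / 2) (by linarith)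
  set ε := k * η / (2 * H + 1) with hεdef
  have hε : 0 < ε := by positivity
  have hkε : k / ε * η = 2 * H + 1 := by
    rw [hεdef]
    field_simp
  obtain ⟨s, hs, hYs⟩ := (hY.hasIncrements ε hε).neg.exists_le_of_le_above (R := -l / 2)
    (K := -(k / ε)) (hY.continuous ε hε).neg.continuousOn
    ((hY.continuous_drift hε).neg.intervalIntegrable _ _) hτ
    (by simp only [Pi.neg_apply, hY.apply_zero ε hε]; linarith)
    fun u _ hu => neg_le_neg (div_le_approxDrift ha (by simp only [Pi.neg_apply] at hu; linarith))
  simp only [Pi.neg_apply] at hYs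
  have hYτ := hY.apply_le_of_tendsto hk.le ha hτ hlim hε
  have h1 := hH τ ⟨hτ, le_rfl⟩
  have h2 := hH s hs
  rw [Real.norm_eq_abs, abs_le] at h1 h2
  rcases lt_or_ge (τ - s) η with hsη | hsη
  · have hclose := hhη (x := s) (by
      rw [Real.dist_eq, abs_sub_comm, abs_of_nonneg (by linarith [hs.2])]
      exact hsη)
    rw [Real.dist_eq] at hclose
    have : 0 ≤ k / ε * (τ - s) := mul_nonneg (by positivity) (by linarith [hs.2])
    linarith [abs_lt.1 hclose]
  · have : 2 * H + 1 ≤ k / ε * (τ - s) := hkε ▸ mul_le_mul_of_nonneg_left hsη (by positivity)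
    linarith

theorem eventually_forall_le (hY : IsApproxFamily k a y₀ h Y) (hk : 0 ≤ k) (ha : 0 ≤ a)
    (hh : Continuous h) {α c : ℝ} (hα : 0 ≤ α) (hYα : ∀ ε, 0 < ε → Y ε α ≤ 0) (hc : 0 < c) :
    ∀ᶠ s in 𝓝[>] α, ∀ ε, 0 < ε → Y ε s ≤ c := by
  -- Above `c / 2` the drift is at most `K = 2 k / c` uniformly in `ε`.
  obtain ⟨η, hη, hhη⟩ := Metric.continuousAt_iff.1 (hh.continuousAt (x := α)) (c / 8)
    (by positivity)
  set K := k / (c / 2)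
  have hK : ∀ᶠ s in 𝓝[>] α, K * (s - α) < c / 4 := by
    have : Tendsto (fun s => K * (s - α)) (𝓝[>] α) (𝓝 (K * (α - α))) :=
      ((continuous_const.mul (continuous_id.sub continuous_const)).tendsto α).mono_left
        nhdsWithin_le_nhds
    rw [sub_self, mul_zero] at this
    exact this.eventually (gt_mem_nhds (by positivity))
  filter_upwards [hK, Ioo_mem_nhdsGT (show α < α + η by linarith)] with s hsK hs ε hε
  obtain ⟨u, hu, hYs⟩ := ((hY.hasIncrements ε hε).mono hα).exists_le_of_le_above (R := c / 2)
    (K := K) (hY.continuous ε hε).continuousOn ((hY.continuous_drift hε).intervalIntegrable _ _)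
    hs.1.le (by linarith [hYα ε hε]) fun v _ hv =>
      (approxDrift_le hk ha hε.le (by positivity) hv.le).trans (sub_le_self _ (by positivity))
  have hdist : ∀ x ∈ Icc α s, |h x - h α| < c / 8 := fun x hx => by
    rw [← Real.dist_eq]
    exact hhη (by rw [Real.dist_eq, abs_of_nonneg (by linarith [hx.1])]; linarith [hx.2, hs.2])
  have h1 := hdist s ⟨hs.1.le, le_rfl⟩
  have h2 := hdist u hu
  have h3 : K * (s - u) ≤ K * (s - α) :=
    mul_le_mul_of_nonneg_left (by linarith [hu.1]) (by positivity)
  linarith [abs_lt.1 h1, abs_lt.1 h2]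

theorem lim_le_lim_add (hY : IsApproxFamily k a y₀ h Y) (hk : 0 ≤ k) (ha : 0 ≤ a)
    {t T B lt lT : ℝ} (ht : 0 ≤ t) (htT : t ≤ T) (hB : ∀ ε, 0 < ε → ∀ u ∈ Icc t T, Y ε u ≤ B)
    (hlt : Tendsto (fun ε => Y ε t) (𝓝[>] 0) (𝓝 lt))
    (hlT : Tendsto (fun ε => Y ε T) (𝓝[>] 0) (𝓝 lT)) :
    lt ≤ lT + a * B * (T - t) - (h T - h t) := by
  refine le_of_tendsto_of_tendsto hlt (hlT.add_const _ |>.sub_const _)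
    (eventually_mem_nhdsWithin.mono fun ε (hε : 0 < ε) => ?_)
  have := (hY.hasIncrements ε hε).neg.sub_le (K := a * B)
    ((hY.continuous_drift hε).neg.intervalIntegrable _ _) ht htT fun u hu =>
      neg_le.1 (neg_mul_le_approxDrift hk ha hε.le (hB ε hε u ⟨hu.1.le, hu.2.le⟩))
  simp only [Pi.neg_apply] at this
  linarith

theorem continuousWithinAt_lim_left (hY : IsApproxFamily k a y₀ h Y) (hk : 0 ≤ k)
    (ha : 0 ≤ a) (hh : Continuous h)
    (hlim : ∀ t, 0 ≤ t → Tendsto (fun ε => Y ε t) (𝓝[>] 0) (𝓝 (L t))) {α β : ℝ} (hα : 0 ≤ α)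
    (hαβ : α < β) (hpos : ∀ s ∈ Ioo α β, 0 < L s) (hLα : L α = 0) :
    ContinuousWithinAt L (Icc α β) α := by
  refine (continuousWithinAt_Ioi_iff_Ici.1 ?_).mono Icc_subset_Ici_self
  rw [ContinuousWithinAt, hLα]
  refine tendsto_order.2 ⟨fun c hc => eventually_of_mem (Ioo_mem_nhdsGT hαβ) fun s hs =>
    hc.trans (hpos s hs), fun c hc => ?_⟩
  filter_upwards [hY.eventually_forall_le hk ha hh hα
    (fun ε hε => (hY.apply_le_of_tendsto hk ha hα (hlim α hα) hε).trans hLα.le) (half_pos hc),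
    eventually_mem_nhdsWithin] with s hs (hαs : α < s)
  exact (le_of_tendsto (hlim s (hα.trans hαs.le)) (eventually_mem_nhdsWithin.mono hs)).trans_lt
    (half_lt_self hc)

theorem continuousWithinAt_lim_right (hY : IsApproxFamily k a y₀ h Y) (hk : 0 ≤ k)
    (ha : 0 ≤ a) (hh : Continuous h)
    (hlim : ∀ t, 0 ≤ t → Tendsto (fun ε => Y ε t) (𝓝[>] 0) (𝓝 (L t))) {α β B : ℝ}
    (hα : 0 ≤ α) (hαβ : α < β) (hB : ∀ ε, 0 < ε → ∀ u ∈ Icc α β, Y ε u ≤ B)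
    (hpos : ∀ s ∈ Ioo α β, 0 < L s) (hLβ : L β = 0) :
    ContinuousWithinAt L (Icc α β) β := by
  refine (continuousWithinAt_Iio_iff_Iic.1 ?_).mono Icc_subset_Iic_self
  have hup : Tendsto (fun t => a * B * (β - t) - (h β - h t)) (𝓝[<] β) (𝓝 0) := by
    have hc : Continuous fun t => a * B * (β - t) - (h β - h t) := by fun_prop
    simpa using (hc.tendsto β).mono_left nhdsWithin_le_nhds
  rw [ContinuousWithinAt, hLβ]
  refine tendsto_of_tendsto_of_tendsto_of_le_of_le' tendsto_const_nhds hup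
    (eventually_of_mem (Ioo_mem_nhdsLT hαβ) fun t ht => (hpos t ht).le) ?_
  filter_upwards [Ioo_mem_nhdsLT hαβ] with t ht
  have := hY.lim_le_lim_add hk ha (hα.trans ht.1.le) ht.2.le
    (fun ε hε u hu => hB ε hε u ⟨ht.1.le.trans hu.1, hu.2⟩) (hlim t (hα.trans ht.1.le))
    (hlim β (hα.trans hαβ.le))
  linarith

theorem exists_pos_le (hY : IsApproxFamily k a y₀ h Y) (hk : 0 ≤ k) (ha : 0 ≤ a)
    (hlim : ∀ t, 0 ≤ t → Tendsto (fun ε => Y ε t) (𝓝[>] 0) (𝓝 (L t))) {s t : ℝ} (hs : 0 ≤ s)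
    (hpos : ∀ u ∈ Icc s t, 0 < L u) :
    ∃ ε₀ > 0, ∃ m > 0, ∀ ε ∈ Ioc 0 ε₀, ∀ u ∈ Icc s t, m ≤ Y ε u :=
  exists_pos_le_of_antitone_of_tendsto isCompact_Icc hY.continuous
    (fun _ _ h₁ h₁₂ _ hu => hY.antitone hk ha h₁ h₁₂ (hs.trans hu.1))
    (fun u hu => hlim u (hs.trans hu.1)) hpos

theorem tendsto_integral_drift (hY : IsApproxFamily k a y₀ h Y) (hk : 0 ≤ k) (ha : 0 ≤ a)
    (hlim : ∀ t, 0 ≤ t → Tendsto (fun ε => Y ε t) (𝓝[>] 0) (𝓝 (L t))) {s t B : ℝ}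
    (hs : 0 ≤ s) (hst : s ≤ t) (hB : ∀ ε, 0 < ε → ∀ u ∈ Icc s t, Y ε u ≤ B)
    (hpos : ∀ u ∈ Icc s t, 0 < L u) :
    Tendsto (fun ε => ∫ u in s..t, approxDrift k a ε (Y ε u)) (𝓝[>] 0)
      (𝓝 (∫ u in s..t, (k / L u - a * L u))) := by
  obtain ⟨ε₀, hε₀, m, hm, hmY⟩ := hY.exists_pos_le hk ha hlim hs hpos
  refine intervalIntegral.tendsto_integral_filter_of_dominated_convergence (fun _ => k / m + a * B)
    (eventually_mem_nhdsWithin.mono fun ε hε => (hY.continuous_drift hε).aestronglyMeasurable)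
    (eventually_of_mem (Ioc_mem_nhdsGT hε₀) fun ε hε => ae_of_all _ fun u hu => ?_)
    intervalIntegrable_const (ae_of_all _ fun u hu => ?_)
  · rw [uIoc_of_le hst] at hu
    rw [Real.norm_eq_abs]
    exact abs_approxDrift_le hk ha hε.1.le hm (hmY ε hε u ⟨hu.1.le, hu.2⟩)
      (hB ε hε.1 u ⟨hu.1.le, hu.2⟩)
  · rw [uIoc_of_le hst] at hu
    exact tendsto_approxDrift (e := fun ε => ε) (tendsto_id.mono_left nhdsWithin_le_nhds)
      (hlim u (hs.trans hu.1.le)) (hpos u ⟨hu.1.le, hu.2⟩)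

theorem lim_sub_lim (hY : IsApproxFamily k a y₀ h Y) (hk : 0 ≤ k) (ha : 0 ≤ a)
    (hlim : ∀ t, 0 ≤ t → Tendsto (fun ε => Y ε t) (𝓝[>] 0) (𝓝 (L t))) {s t B : ℝ}
    (hs : 0 ≤ s) (hst : s ≤ t) (hB : ∀ ε, 0 < ε → ∀ u ∈ Icc s t, Y ε u ≤ B)
    (hpos : ∀ u ∈ Icc s t, 0 < L u) :
    L t - L s = (∫ u in s..t, (k / L u - a * L u)) + (h t - h s) :=
  tendsto_nhds_unique ((hlim t (hs.trans hst)).sub (hlim s hs))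
    (((hY.tendsto_integral_drift hk ha hlim hs hst hB hpos).add_const (h t - h s)).congr'
      (eventually_mem_nhdsWithin.mono fun ε hε => (hY.hasIncrements ε hε s t hs hst).symm))

theorem intervalIntegrable_lim (hY : IsApproxFamily k a y₀ h Y) (hk : 0 ≤ k) (ha : 0 ≤ a)
    (hlim : ∀ t, 0 ≤ t → Tendsto (fun ε => Y ε t) (𝓝[>] 0) (𝓝 (L t))) {s t B : ℝ}
    (hs : 0 ≤ s) (hst : s ≤ t) (hB : ∀ ε, 0 < ε → ∀ u ∈ Icc s t, Y ε u ≤ B) :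
    IntervalIntegrable L volume s t := by
  obtain ⟨C, hC⟩ := isCompact_Icc.exists_bound_of_continuousOn
    (hY.continuous 1 one_pos).continuousOn (s := Icc s t)
  have hL : AEStronglyMeasurable L (volume.restrict (uIoc s t)) := by
    rw [uIoc_of_le hst]
    exact aestronglyMeasurable_of_tendsto_nhdsGT measurableSet_Ioc hY.continuous
      fun u hu => hlim u (hs.trans hu.1.le)
  refine (intervalIntegrable_const (c := max B C)).mono_fun' hL
    ((ae_restrict_iff' measurableSet_uIoc).2 (ae_of_all _ fun u hu => ?_))
  rw [uIoc_of_le hst] at hu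
  have hu' : u ∈ Icc s t := ⟨hu.1.le, hu.2⟩
  have h1 := hC u hu'
  show ‖L u‖ ≤ max B C
  rw [Real.norm_eq_abs, abs_le] at h1 ⊢
  constructor
  · linarith [hY.apply_le_of_tendsto hk ha (hs.trans hu'.1) (hlim u (hs.trans hu'.1)) one_pos,
      le_max_right B C]
  · exact (le_of_tendsto (hlim u (hs.trans hu'.1)) (eventually_mem_nhdsWithin.mono fun ε hε =>
      hB ε hε u hu')).trans (le_max_left B C)

theorem intervalIntegrable_div_lim (hY : IsApproxFamily k a y₀ h Y) (hk : 0 ≤ k) (ha : 0 ≤ a)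
    (hlim : ∀ t, 0 ≤ t → Tendsto (fun ε => Y ε t) (𝓝[>] 0) (𝓝 (L t))) {s t : ℝ}
    (hs : 0 ≤ s) (hst : s ≤ t) (hpos : ∀ u ∈ Icc s t, 0 < L u) :
    IntervalIntegrable (fun u => k / L u) volume s t := by
  obtain ⟨ε₀, hε₀, m, hm, hmY⟩ := hY.exists_pos_le hk ha hlim hs hpos
  have hL : AEStronglyMeasurable L (volume.restrict (uIoc s t)) := by
    rw [uIoc_of_le hst]
    exact aestronglyMeasurable_of_tendsto_nhdsGT measurableSet_Ioc hY.continuous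
      fun u hu => hlim u (hs.trans hu.1.le)
  refine (intervalIntegrable_const (c := k / m)).mono_fun'
    (hL.aemeasurable.const_div k).aestronglyMeasurable
    ((ae_restrict_iff' measurableSet_uIoc).2 (ae_of_all _ fun u hu => ?_))
  rw [uIoc_of_le hst] at hu
  have hmL : m ≤ L u := (hmY ε₀ ⟨hε₀, le_rfl⟩ u ⟨hu.1.le, hu.2⟩).trans
    (hY.apply_le_of_tendsto hk ha (hs.trans hu.1.le) (hlim u (hs.trans hu.1.le)) hε₀)
  show ‖k / L u‖ ≤ k / m
  rw [Real.norm_eq_abs, abs_of_nonneg (div_nonneg hk (hm.le.trans hmL))]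
  exact div_le_div_of_nonneg_left hk hm hmL

theorem integral_div_lim_of_forall_Icc_pos (hY : IsApproxFamily k a y₀ h Y) (hk : 0 ≤ k)
    (ha : 0 ≤ a)
    (hlim : ∀ t, 0 ≤ t → Tendsto (fun ε => Y ε t) (𝓝[>] 0) (𝓝 (L t))) {s t B : ℝ}
    (hs : 0 ≤ s) (hst : s ≤ t) (hB : ∀ ε, 0 < ε → ∀ u ∈ Icc s t, Y ε u ≤ B)
    (hpos : ∀ u ∈ Icc s t, 0 < L u) :
    ∫ u in s..t, k / L u = L t - L s + a * (∫ u in s..t, L u) - (h t - h s) := by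
  have := hY.lim_sub_lim hk ha hlim hs hst hB hpos
  rw [intervalIntegral.integral_sub (hY.intervalIntegrable_div_lim hk ha hlim hs hst hpos)
    ((hY.intervalIntegrable_lim hk ha hlim hs hst hB).const_mul a),
    intervalIntegral.integral_const_mul] at this
  linarith

theorem integral_div_lim_of_forall_Ioo_pos (hY : IsApproxFamily k a y₀ h Y) (hk : 0 < k)
    (ha : 0 ≤ a) (hh : Continuous h)
    (hlim : ∀ t, 0 ≤ t → Tendsto (fun ε => Y ε t) (𝓝[>] 0) (𝓝 (L t))) {α β B : ℝ}
    (hα : 0 ≤ α) (hαβ : α < β) (hB : ∀ ε, 0 < ε → ∀ u ∈ Icc α β, Y ε u ≤ B)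
    (hpos : ∀ s ∈ Ioo α β, 0 < L s) (hcα : ContinuousWithinAt L (Icc α β) α)
    (hcβ : ContinuousWithinAt L (Icc α β) β) {t : ℝ} (ht : t ∈ Icc α β) :
    ∫ u in α..t, k / L u = L t - L α + a * (∫ u in α..t, L u) - (h t - h α) := by
  have hLint := hY.intervalIntegrable_lim hk.le ha hlim hα hαβ.le hB
  have hLα : ∀ x ∈ Icc α β, IntervalIntegrable L volume α x := fun x hx =>
    hLint.mono_set (uIcc_subset_uIcc_left (by rwa [uIcc_of_le hαβ.le]))
  have hP : ContinuousOn (fun x => ∫ u in α..x, L u) (Icc α β) := by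
    simpa [uIcc_of_le hαβ.le] using
      intervalIntegral.continuousOn_primitive_interval' hLint left_mem_uIcc
  set Φ : ℝ → ℝ := fun x => L x + a * (∫ u in α..x, L u) - h x
  have hsub : ∀ s t, α < s → s ≤ t → t < β → Icc s t ⊆ Ioo α β := fun s t hs _ ht u hu =>
    ⟨hs.trans_le hu.1, hu.2.trans_lt ht⟩
  have heq : ∀ s t, α < s → s ≤ t → t < β → ∫ u in s..t, k / L u = Φ t - Φ s := by
    intro s t hs hst ht
    rw [hY.integral_div_lim_of_forall_Icc_pos hk.le ha hlim (hα.trans hs.le) hst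
      (fun ε hε u hu => hB ε hε u (Ioo_subset_Icc_self (hsub s t hs hst ht hu)))
      fun u hu => hpos u (hsub s t hs hst ht hu),
      ← intervalIntegral.integral_interval_sub_left (hLα t ⟨hs.le.trans hst, ht.le⟩)
        (hLα s ⟨hs.le, hst.trans ht.le⟩)]
    ring
  have hΦ : ∀ x ∈ Icc α β, ContinuousWithinAt L (Icc α β) x → ContinuousWithinAt Φ (Icc α β) x :=
    fun x hx hLx => (hLx.add ((hP x hx).const_mul a)).sub hh.continuousWithinAt
  have hf := intervalIntegrable_of_nonneg_of_integral_eq_sub hαβ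
    (fun x hx => (div_pos hk (hpos x hx)).le)
    (fun s t hs hst ht => hY.intervalIntegrable_div_lim hk.le ha hlim (hα.trans hs.le) hst
      fun u hu => hpos u (hsub s t hs hst ht hu)) heq
    (hΦ α (left_mem_Icc.2 hαβ.le) hcα) (hΦ β (right_mem_Icc.2 hαβ.le) hcβ)
  have := integral_eq_sub_of_forall_Ioo hαβ hf heq (hΦ α (left_mem_Icc.2 hαβ.le) hcα)
    (hΦ β (right_mem_Icc.2 hαβ.le) hcβ) ht
  simp only [Φ, intervalIntegral.integral_same] at this
  linarith

end IsApproxFamily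

theorem limit_process_equation_on_component_general
    (Y₀ k a σ : ℝ) (hY₀ : 0 < Y₀) (hk : 0 < k) (ha : 0 < a)
    (g : ℝ → ℝ) (hg : Continuous g) (hg0 : g 0 = 0)
    (Y : ℝ → ℝ → ℝ) (Ylim : ℝ → ℝ)
    (hYc : ∀ ε : ℝ, 0 < ε → Continuous (Y ε))
    (hYeq : ∀ ε : ℝ, 0 < ε → ∀ t : ℝ, 0 ≤ t →
      Y ε t = Y₀ + (∫ s in (0:ℝ)..t, k / ((if 0 < Y ε s then Y ε s else 0) + ε))
        - a * (∫ s in (0:ℝ)..t, Y ε s) + σ * g t)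
    (hlim : ∀ t : ℝ, 0 ≤ t →
      Tendsto (fun ε => Y ε t) (𝓝[>] 0) (𝓝 (Ylim t)))
    (α β : ℝ) (hα : 0 ≤ α) (hαβ : α < β)
    (hpos : ∀ t ∈ Set.Ioo α β, 0 < Ylim t)
    (hαend : Ylim α ≤ 0) (hβend : Ylim β ≤ 0) :
    ∀ t ∈ Set.Icc α β,
      Ylim t = (∫ s in α..t, k / Ylim s) - a * (∫ s in α..t, Ylim s)
        + σ * (g t - g α) := by
  have hY := IsApproxFamily.of_integral_eq hg0 hYc hYeq
  have hh : Continuous fun t => σ * g t := continuous_const.mul hg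
  have hβ : 0 ≤ β := hα.trans hαβ.le
  obtain ⟨B, hB⟩ := hY.exists_forall_le hk.le ha hh β
  have hBαβ : ∀ ε, 0 < ε → ∀ u ∈ Icc α β, Y ε u ≤ B := fun ε hε u hu =>
    hB ε hε u ⟨hα.trans hu.1, hu.2⟩
  have hLα : Ylim α = 0 :=
    hαend.antisymm (hY.nonneg_of_tendsto hY₀.le hk ha.le hh hα (hlim α hα))
  have hLβ : Ylim β = 0 :=
    hβend.antisymm (hY.nonneg_of_tendsto hY₀.le hk ha.le hh hβ (hlim β hβ))
  intro t ht
  have := hY.integral_div_lim_of_forall_Ioo_pos hk ha.le hh hlim hα hαβ hBαβ hpos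
    (hY.continuousWithinAt_lim_left hk.le ha.le hh hlim hα hαβ hpos hLα)
    (hY.continuousWithinAt_lim_right hk.le ha.le hh hlim hα hαβ hBαβ hpos hLβ) ht
  rw [hLα] at this
  linarith

/-- Part 2 of Theorem 4: on each connected component (α, β) of its positivity
set, the limit process Y satisfies the square-root integral equation. -/
theorem limit_process_equation_on_component
    (Y₀ k a σ : ℝ) (hY₀ : 0 < Y₀) (hk : 0 < k) (ha : 0 < a) (hσ : 0 < σ)
    (g : ℝ → ℝ) (hg : Continuous g) (hg0 : g 0 = 0)
    (Y : ℝ → ℝ → ℝ) (Ylim : ℝ → ℝ)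
    (hYc : ∀ ε : ℝ, 0 < ε → Continuous (Y ε))
    (hYeq : ∀ ε : ℝ, 0 < ε → ∀ t : ℝ, 0 ≤ t →
      Y ε t = Y₀ + (∫ s in (0:ℝ)..t, k / ((if 0 < Y ε s then Y ε s else 0) + ε))
        - a * (∫ s in (0:ℝ)..t, Y ε s) + σ * g t)
    (hlim : ∀ t : ℝ, 0 ≤ t →
      Tendsto (fun ε => Y ε t) (𝓝[>] 0) (𝓝 (Ylim t)))
    (α β : ℝ) (hα : 0 ≤ α) (hαβ : α < β)
    (hpos : ∀ t ∈ Set.Ioo α β, 0 < Ylim t)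
    (hαend : Ylim α ≤ 0) (hβend : Ylim β ≤ 0) :
    ∀ t ∈ Set.Icc α β,
      Ylim t = (∫ s in α..t, k / Ylim s) - a * (∫ s in α..t, Ylim s)
        + σ * (g t - g α) :=
  limit_process_equation_on_component_general Y₀ k a σ hY₀ hk ha g hg hg0 Y Ylim hYc hYeq hlim α β
    hα hαβ hpos hαend hβend
end

section
/- Let $Y$ be the limit of the pathwise $\varepsilon$-approximations, and let $\beta_0 = \sup\{t>0 : \forall s\in[0,t), Y(s)>0\}$ be the first zero of $Y$ (assume $\beta_0<\infty$). Then $\lim_{t\to\beta_0-}Y(t)=Y(\beta_0)=0$ and for all $t\in[0,\beta_0]$: $Y(t) = Y_0 + \int_0^t \frac{k}{Y(s)}\,ds - a\int_0^t Y(s)\,ds + \sigma g(t)$. -/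
/-!
Increasing the penalty `ε` lowers the drift `k / (x⁺ + ε)`, so by comparison `Y ε t` decreases
in `ε` and `Ylim` is the supremum of the approximations. `Ylim ≥ 0`, because below zero the drift
`k / ε` pushes `Y ε` back up within a time of order `ε`. On `[0, T]` with `T < β₀` a Dini-type
compactness argument makes the approximations uniformly positive for small `ε`, and the equation
passes to the limit by dominated convergence.

Every `Y ε` is nonpositive at `β₀`. A fall from level `c` to `0` cannot be paid for by the
nonnegative drift, only by `-a Y` and by the increment of `σ g`, which are small on short intervals
ending at `β₀`; hence `Ylim → 0` at `β₀⁻`. At `β₀` itself the drift integral converges by monotone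
convergence, because every other term of the equation converges.
-/

open Filter Topology MeasureTheory Set

theorem exists_last_ge_of_continuousOn {f : ℝ → ℝ} {a b c : ℝ} (hf : ContinuousOn f (Icc a b))
    (hab : a ≤ b) (ha : c ≤ f a) : ∃ u ∈ Icc a b, c ≤ f u ∧ ∀ x ∈ Ioc u b, f x < c := by
  set S := Icc a b ∩ f ⁻¹' Ici c
  have hS : IsClosed S := hf.preimage_isClosed_of_isClosed isClosed_Icc isClosed_Ici
  have haS : a ∈ S := ⟨⟨le_rfl, hab⟩, ha⟩
  have hbdd : BddAbove S := ⟨b, fun x hx => hx.1.2⟩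
  have hmem : sSup S ∈ S := hS.csSup_mem ⟨a, haS⟩ hbdd
  refine ⟨sSup S, hmem.1, hmem.2, fun x hx => ?_⟩
  by_contra! hcx
  have hxS : x ∈ S := ⟨⟨hmem.1.1.trans hx.1.le, hx.2⟩, hcx⟩
  exact hx.1.not_ge (le_csSup hbdd hxS)

theorem tendsto_inv_natCast_succ_nhdsGT_zero :
    Tendsto (fun n : ℕ => ((n : ℝ) + 1)⁻¹) atTop (𝓝[>] 0) :=
  tendsto_inv_atTop_nhdsGT_zero.comp (tendsto_atTop_add_const_right _ 1 tendsto_natCast_atTop_atTop)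

theorem IsCompact.exists_forall_lt_of_antitone_tendsto {X : Type*} [TopologicalSpace X]
    {K : Set X} (hK : IsCompact K) {F : ℝ → X → ℝ} {f : X → ℝ}
    (hFc : ∀ ε, 0 < ε → Continuous (F ε))
    (hanti : ∀ ε₁ ε₂, 0 < ε₁ → ε₁ ≤ ε₂ → ∀ x ∈ K, F ε₂ x ≤ F ε₁ x)
    (hlim : ∀ x ∈ K, Tendsto (fun ε => F ε x) (𝓝[>] 0) (𝓝 (f x)))
    (hpos : ∀ x ∈ K, 0 < f x) :
    ∃ δ > 0, ∀ ε ∈ Ioc 0 δ, ∀ x ∈ K, δ < F ε x := by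
  set U : ℕ → Set X := fun n => {x | ((n : ℝ) + 1)⁻¹ < F ((n : ℝ) + 1)⁻¹ x}
  have hU : ∀ n, IsOpen (accumulate U n) := fun n =>
    isOpen_biUnion fun m _ => isOpen_lt continuous_const (hFc _ (by positivity))
  have hcover : K ⊆ ⋃ n, accumulate U n := by
    rw [iUnion_accumulate]
    intro x hx
    have h := ((hlim x hx).comp tendsto_inv_natCast_succ_nhdsGT_zero).sub
      (tendsto_nhdsWithin_iff.1 tendsto_inv_natCast_succ_nhdsGT_zero).1
    rw [sub_zero] at h
    obtain ⟨n, hn⟩ := (h.eventually (lt_mem_nhds (hpos x hx))).exists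
    exact mem_iUnion.2 ⟨n, sub_pos.1 hn⟩
  obtain ⟨n, hn⟩ := hK.elim_directed_cover _ hU hcover directed_accumulate
  refine ⟨((n : ℝ) + 1)⁻¹, by positivity, fun ε hε x hx => ?_⟩
  obtain ⟨m, hmn, hm⟩ := mem_accumulate.1 (hn hx)
  have hnm : ((n : ℝ) + 1)⁻¹ ≤ ((m : ℝ) + 1)⁻¹ := by gcongr
  calc ((n : ℝ) + 1)⁻¹ ≤ ((m : ℝ) + 1)⁻¹ := hnm
    _ < F ((m : ℝ) + 1)⁻¹ x := hm
    _ ≤ F ε x := hanti ε _ hε.1 (hε.2.trans hnm) x hx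

theorem pos_of_isLUB_firstZero {f : ℝ → ℝ} {β : ℝ}
    (hβ : IsLUB {t | 0 < t ∧ ∀ s ∈ Ico 0 t, 0 < f s} β) {r : ℝ} (hr : r ∈ Ico 0 β) :
    0 < f r := by
  by_contra! hfr
  refine hr.2.not_ge (hβ.2 fun t ht => ?_)
  by_contra! hrt
  exact (ht.2 r ⟨hr.1, hrt⟩).not_ge hfr

theorem exists_nonpos_of_isLUB_firstZero {f : ℝ → ℝ} {β : ℝ} (hβ₀ : 0 ≤ β)
    (hβ : IsLUB {t | 0 < t ∧ ∀ s ∈ Ico 0 t, 0 < f s} β) {r : ℝ} (hr : β < r) :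
    ∃ s ∈ Ico β r, f s ≤ 0 := by
  have hr' : ¬(0 < r ∧ ∀ s ∈ Ico 0 r, 0 < f s) := fun h => hr.not_ge (hβ.1 h)
  push Not at hr'
  obtain ⟨s, hs, hfs⟩ := hr' (hβ₀.trans_lt hr)
  refine ⟨s, ⟨?_, hs.2⟩, hfs⟩
  by_contra! hsβ
  exact (pos_of_isLUB_firstZero hβ ⟨hs.1, hsβ⟩).not_ge hfs

theorem IntervalIntegrable.tendsto_integral_nhdsLT {f : ℝ → ℝ} {a b : ℝ} (hab : a < b)
    (hf : IntervalIntegrable f volume a b) :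
    Tendsto (fun t => ∫ x in a..t, f x) (𝓝[<] b) (𝓝 (∫ x in a..b, f x)) := by
  have hmem : uIcc a b ∈ 𝓝[<] b := by rw [uIcc_of_le hab.le]; exact Icc_mem_nhdsLT hab
  exact ((intervalIntegral.continuousOn_primitive_interval' hf left_mem_uIcc) b
    right_mem_uIcc).tendsto.mono_left (nhdsWithin_le_of_mem hmem)

theorem intervalIntegral_eq_of_tendsto_nhdsLT {f : ℝ → ℝ} {a b L : ℝ} (hab : a < b)
    (hf : ∀ x ∈ Ioo a b, 0 ≤ f x) (hfi : ∀ t ∈ Ico a b, IntervalIntegrable f volume a t)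
    (hL : Tendsto (fun t => ∫ x in a..t, f x) (𝓝[<] b) (𝓝 L)) : ∫ x in a..b, f x = L := by
  obtain ⟨u, -, hu, hub⟩ := exists_seq_strictMono_tendsto' hab
  have hu' : Tendsto u atTop (𝓝[<] b) :=
    tendsto_nhdsWithin_iff.2 ⟨hub, Eventually.of_forall fun n => (hu n).2⟩
  obtain ⟨I, hI⟩ := (hL.comp hu').isBoundedUnder_le
  have hint : IntegrableOn f (Ioc a b) := by
    refine integrableOn_Ioc_of_intervalIntegral_norm_bounded_right (I := I)
      (fun n => (hfi (u n) ⟨(hu n).1.le, (hu n).2⟩).1) hub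
      ((eventually_map.1 hI).mono fun n hn => ?_)
    rwa [setIntegral_congr_fun measurableSet_Ioc fun x hx =>
      Real.norm_of_nonneg (hf x ⟨hx.1, hx.2.trans_lt (hu n).2⟩),
      ← intervalIntegral.integral_of_le (hu n).1.le]
  exact tendsto_nhds_unique
    (((intervalIntegrable_iff_integrableOn_Ioc_of_le hab.le).2 hint).tendsto_integral_nhdsLT hab) hL

theorem intervalIntegrable_of_abs_le {f g : ℝ → ℝ} {a b : ℝ} (hab : a ≤ b)
    (hg : IntervalIntegrable g volume a b) (hf : AEStronglyMeasurable f (volume.restrict (Ioc a b)))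
    (hfg : ∀ x ∈ Ioc a b, |f x| ≤ g x) : IntervalIntegrable f volume a b :=
  hg.mono_fun' (by rwa [uIoc_of_le hab])
    (by rw [uIoc_of_le hab]; exact ae_restrict_of_forall_mem measurableSet_Ioc hfg)

noncomputable def penalizedDrift (k ε x : ℝ) : ℝ := k / (max x 0 + ε)

section penalizedDrift

variable {k ε x : ℝ}

theorem penalizedDrift_nonneg (hk : 0 ≤ k) (hε : 0 ≤ ε) : 0 ≤ penalizedDrift k ε x :=
  div_nonneg hk (add_nonneg (le_max_right _ _) hε)

theorem penalizedDrift_le_penalizedDrift {ε' x' : ℝ} (hk : 0 ≤ k) (hε : 0 < ε) (hεε' : ε ≤ ε')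
    (hxx' : x ≤ x') : penalizedDrift k ε' x' ≤ penalizedDrift k ε x :=
  div_le_div_of_nonneg_left hk (add_pos_of_nonneg_of_pos (le_max_right _ _) hε)
    (add_le_add (max_le_max hxx' le_rfl) hεε')

theorem penalizedDrift_of_nonpos (hx : x ≤ 0) : penalizedDrift k ε x = k / ε := by
  rw [penalizedDrift, max_eq_right hx, zero_add]

theorem penalizedDrift_le {δ : ℝ} (hk : 0 ≤ k) (hδ : 0 < δ) (hε : 0 ≤ ε) (hx : δ ≤ x) :
    penalizedDrift k ε x ≤ k / δ :=
  div_le_div_of_nonneg_left hk hδ (by linarith [le_max_left x 0])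

theorem Continuous.penalizedDrift {y : ℝ → ℝ} (hy : Continuous y) (hε : 0 < ε) :
    Continuous fun s => penalizedDrift k ε (y s) :=
  continuous_const.div ((hy.max continuous_const).add continuous_const) fun _ =>
    (add_pos_of_nonneg_of_pos (le_max_right _ _) hε).ne'

theorem tendsto_penalizedDrift {y : ℝ → ℝ} (hy : Tendsto y (𝓝[>] 0) (𝓝 x)) (hx : 0 < x) :
    Tendsto (fun ε => penalizedDrift k ε (y ε)) (𝓝[>] 0) (𝓝 (k / x)) := by
  have h := (hy.max (tendsto_const_nhds (x := (0 : ℝ)))).add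
    (tendsto_nhdsWithin_of_tendsto_nhds tendsto_id)
  rw [max_eq_left hx.le, add_zero] at h
  exact tendsto_const_nhds.div h hx.ne'

end penalizedDrift

/-- The paper's `ε`-approximations, with the driving path `σ g` written `F`. -/
structure IsApproxFamily_s15 (Y₀ k a : ℝ) (F : ℝ → ℝ) (Y : ℝ → ℝ → ℝ) : Prop where
  continuous : ∀ ε, 0 < ε → Continuous (Y ε)
  eq : ∀ ε, 0 < ε → ∀ t, 0 ≤ t →
    Y ε t = Y₀ + (∫ s in 0..t, penalizedDrift k ε (Y ε s)) - a * (∫ s in 0..t, Y ε s) + F t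

namespace IsApproxFamily_s15

variable {Y₀ k a : ℝ} {F : ℝ → ℝ} {Y : ℝ → ℝ → ℝ} {Ylim : ℝ → ℝ} {ε : ℝ}

theorem sub_eq (hY : IsApproxFamily_s15 Y₀ k a F Y) (hε : 0 < ε) {u t : ℝ} (hu : 0 ≤ u)
    (ht : 0 ≤ t) :
    Y ε t - Y ε u = (∫ s in u..t, penalizedDrift k ε (Y ε s)) - a * (∫ s in u..t, Y ε s)
      + (F t - F u) := by
  have hc := hY.continuous ε hε
  rw [hY.eq ε hε t ht, hY.eq ε hε u hu,
    ← intervalIntegral.integral_add_adjacent_intervals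
      ((hc.penalizedDrift hε).intervalIntegrable 0 u)
      ((hc.penalizedDrift hε).intervalIntegrable u t),
    ← intervalIntegral.integral_add_adjacent_intervals (hc.intervalIntegrable 0 u)
      (hc.intervalIntegrable u t)]
  ring

theorem apply_zero (hY : IsApproxFamily_s15 Y₀ k a F Y) (hF0 : F 0 = 0) (hε : 0 < ε) :
    Y ε 0 = Y₀ := by
  simpa [hF0] using hY.eq ε hε 0 le_rfl

theorem apply_le_apply_of_le (hY : IsApproxFamily_s15 Y₀ k a F Y) (hk : 0 ≤ k) (ha : 0 ≤ a)
    {ε₁ ε₂ t : ℝ} (hε₁ : 0 < ε₁) (hε : ε₁ ≤ ε₂) (ht : 0 ≤ t) : Y ε₂ t ≤ Y ε₁ t := by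
  have hε₂ := hε₁.trans_le hε
  have hc₁ := hY.continuous ε₁ hε₁
  have hc₂ := hY.continuous ε₂ hε₂
  have hD0 : 0 ≤ Y ε₁ 0 - Y ε₂ 0 := by
    rw [hY.eq ε₁ hε₁ 0 le_rfl, hY.eq ε₂ hε₂ 0 le_rfl]
    simp
  obtain ⟨u, hu, hDu, hlt⟩ : ∃ u ∈ Icc 0 t, 0 ≤ Y ε₁ u - Y ε₂ u ∧
      ∀ x ∈ Ioc u t, Y ε₁ x - Y ε₂ x < 0 :=
    exists_last_ge_of_continuousOn (hc₁.sub hc₂).continuousOn ht hD0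
  have hdrift : ∫ s in u..t, penalizedDrift k ε₂ (Y ε₂ s) ≤
      ∫ s in u..t, penalizedDrift k ε₁ (Y ε₁ s) :=
    intervalIntegral.integral_mono_on_of_le_Ioo hu.2
      ((hc₂.penalizedDrift hε₂).intervalIntegrable _ _)
      ((hc₁.penalizedDrift hε₁).intervalIntegrable _ _) fun x hx =>
      penalizedDrift_le_penalizedDrift hk hε₁ hε (sub_neg.1 (hlt x (Ioo_subset_Ioc_self hx))).le
  have hint : ∫ s in u..t, Y ε₁ s ≤ ∫ s in u..t, Y ε₂ s :=
    intervalIntegral.integral_mono_on_of_le_Ioo hu.2 (hc₁.intervalIntegrable _ _)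
      (hc₂.intervalIntegrable _ _) fun x hx => (sub_neg.1 (hlt x (Ioo_subset_Ioc_self hx))).le
  have h₁ := hY.sub_eq hε₁ hu.1 ht
  have h₂ := hY.sub_eq hε₂ hu.1 ht
  linarith [mul_le_mul_of_nonneg_left hint ha]

theorem apply_le_lim (hY : IsApproxFamily_s15 Y₀ k a F Y) (hk : 0 ≤ k) (ha : 0 ≤ a)
    (hlim : ∀ t, 0 ≤ t → Tendsto (fun ε => Y ε t) (𝓝[>] 0) (𝓝 (Ylim t))) (hε : 0 < ε) {t : ℝ}
    (ht : 0 ≤ t) : Y ε t ≤ Ylim t :=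
  ge_of_tendsto (hlim t ht) <| mem_of_superset (Ioc_mem_nhdsGT hε) fun _ hε' =>
    hY.apply_le_apply_of_le hk ha hε'.1 hε'.2 ht

/-- The drift is nonnegative, so a fall from level `c` is paid for by `-a Y` and `F` alone. -/
theorem exists_sub_le_of_descent (hY : IsApproxFamily_s15 Y₀ k a F Y) (hk : 0 ≤ k) (ha : 0 ≤ a)
    (hε : 0 < ε) {c u₀ v : ℝ} (hu₀ : 0 ≤ u₀) (hu₀v : u₀ ≤ v) (hc : c ≤ Y ε u₀) :
    ∃ u ∈ Icc u₀ v, c - Y ε v ≤ a * c * (v - u) + (F u - F v) := by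
  have hcont := hY.continuous ε hε
  obtain ⟨u, hu, hcu, hlt⟩ := exists_last_ge_of_continuousOn hcont.continuousOn hu₀v hc
  have hdrift : 0 ≤ ∫ s in u..v, penalizedDrift k ε (Y ε s) :=
    intervalIntegral.integral_nonneg hu.2 fun _ _ => penalizedDrift_nonneg hk hε.le
  have hint : ∫ s in u..v, Y ε s ≤ ∫ _ in u..v, c :=
    intervalIntegral.integral_mono_on_of_le_Ioo hu.2 (hcont.intervalIntegrable _ _)
      intervalIntegrable_const fun x hx => (hlt x (Ioo_subset_Ioc_self hx)).le
  rw [intervalIntegral.integral_const, smul_eq_mul] at hint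
  refine ⟨u, hu, ?_⟩
  linarith [hY.sub_eq hε (hu₀.trans hu.1) (hu₀.trans hu₀v), mul_le_mul_of_nonneg_left hint ha]

/-- Since its last visit to `[0, ∞)`, `Y ε` has been pushed up by the drift `k / ε`. -/
theorem exists_le_of_ascent (hY : IsApproxFamily_s15 Y₀ k a F Y) (ha : 0 ≤ a) (hε : 0 < ε)
    {u₀ t : ℝ} (hu₀ : 0 ≤ u₀) (hu₀t : u₀ ≤ t) (h0 : 0 ≤ Y ε u₀) :
    ∃ u ∈ Icc u₀ t, (t - u) * (k / ε) + (F t - F u) ≤ Y ε t := by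
  have hcont := hY.continuous ε hε
  obtain ⟨u, hu, h0u, hlt⟩ := exists_last_ge_of_continuousOn hcont.continuousOn hu₀t h0
  have hdrift : ∫ _ in u..t, k / ε ≤ ∫ s in u..t, penalizedDrift k ε (Y ε s) :=
    intervalIntegral.integral_mono_on_of_le_Ioo hu.2 intervalIntegrable_const
      ((hcont.penalizedDrift hε).intervalIntegrable _ _) fun x hx =>
      (penalizedDrift_of_nonpos (hlt x (Ioo_subset_Ioc_self hx)).le).ge
  have hint : ∫ s in u..t, Y ε s ≤ ∫ _ in u..t, (0 : ℝ) :=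
    intervalIntegral.integral_mono_on_of_le_Ioo hu.2 (hcont.intervalIntegrable _ _)
      intervalIntegrable_const fun x hx => (hlt x (Ioo_subset_Ioc_self hx)).le
  rw [intervalIntegral.integral_const, smul_eq_mul] at hdrift
  rw [intervalIntegral.integral_zero] at hint
  refine ⟨u, hu, ?_⟩
  linarith [hY.sub_eq hε (hu₀.trans hu.1) (hu₀.trans hu₀t), mul_nonpos_of_nonneg_of_nonpos ha hint]

theorem lim_nonneg (hY : IsApproxFamily_s15 Y₀ k a F Y) (hY₀ : 0 ≤ Y₀) (hk : 0 < k) (ha : 0 ≤ a)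
    (hF : Continuous F) (hF0 : F 0 = 0)
    (hlim : ∀ t, 0 ≤ t → Tendsto (fun ε => Y ε t) (𝓝[>] 0) (𝓝 (Ylim t))) {t : ℝ} (ht : 0 ≤ t) :
    0 ≤ Ylim t := by
  by_contra! hneg
  obtain ⟨R, hR⟩ := isCompact_Icc.exists_bound_of_continuousOn (s := Icc 0 t) hF.continuousOn
  have hR0 : 0 ≤ R := (abs_nonneg _).trans (hR t ⟨ht, le_rfl⟩)
  obtain ⟨r, hr, hFr⟩ :=
    Metric.continuousAt_iff.1 (hF.continuousAt (x := t)) (-Ylim t) (neg_pos.2 hneg)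
  -- small enough that the last nonnegative value of `Y ε` before `t` is taken within `r` of `t`
  set ε := r * k / (2 * R + 1)
  have hε : 0 < ε := by positivity
  obtain ⟨u, hu, hup⟩ :=
    hY.exists_le_of_ascent ha hε le_rfl ht (by rw [hY.apply_zero hF0 hε]; exact hY₀)
  have hYt := hY.apply_le_lim hk.le ha hlim hε ht
  have hFu : |F u| ≤ R := hR u ⟨hu.1, hu.2⟩
  have hFt : |F t| ≤ R := hR t ⟨ht, le_rfl⟩
  have hkε : k / ε * r = 2 * R + 1 := by simp only [ε]; field_simp
  have hslow : (t - u) * (k / ε) < 2 * R + 1 := by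
    linarith [abs_le.1 hFu, abs_le.1 hFt]
  have hclose : dist u t < r := by
    rw [Real.dist_eq, abs_sub_comm, abs_of_nonneg (sub_nonneg.2 hu.2)]
    have h := mul_lt_mul_of_pos_right hslow hr
    rw [mul_assoc, hkε, mul_comm (2 * R + 1)] at h
    exact lt_of_mul_lt_mul_right h (by positivity)
  have hFut := hFr hclose
  rw [Real.dist_eq] at hFut
  linarith [abs_lt.1 hFut, abs_le.1 hFu, abs_le.1 hFt,
    mul_nonneg (sub_nonneg.2 hu.2) (div_pos hk hε).le]

theorem apply_nonpos_of_exists_lim_nonpos (hY : IsApproxFamily_s15 Y₀ k a F Y) (hk : 0 ≤ k) (ha : 0 ≤ a)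
    (hlim : ∀ t, 0 ≤ t → Tendsto (fun ε => Y ε t) (𝓝[>] 0) (𝓝 (Ylim t))) (hε : 0 < ε) {β : ℝ}
    (hβ : 0 ≤ β) (hβlim : ∀ r, β < r → ∃ s ∈ Ico β r, Ylim s ≤ 0) : Y ε β ≤ 0 := by
  by_contra! hpos
  obtain ⟨r, hβr, hsub⟩ := exists_Ico_subset_of_mem_nhds
    (((hY.continuous ε hε).tendsto β).eventually (lt_mem_nhds hpos)) ⟨β + 1, by linarith⟩
  obtain ⟨s, hs, hYs⟩ := hβlim r hβr
  exact (hsub hs).not_ge ((hY.apply_le_lim hk ha hlim hε (hβ.trans hs.1)).trans hYs)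

theorem tendsto_lim_nhdsLT (hY : IsApproxFamily_s15 Y₀ k a F Y) (hk : 0 ≤ k) (ha : 0 ≤ a)
    (hF : Continuous F) (hlim : ∀ t, 0 ≤ t → Tendsto (fun ε => Y ε t) (𝓝[>] 0) (𝓝 (Ylim t)))
    {β : ℝ} (hβ : 0 < β) (hpos : ∀ s ∈ Ico 0 β, 0 < Ylim s) (hβY : ∀ ε, 0 < ε → Y ε β ≤ 0) :
    Tendsto Ylim (𝓝[<] β) (𝓝 0) := by
  have hIco : Ico 0 β ∈ 𝓝[<] β := Ico_mem_nhdsLT hβ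
  refine tendsto_order.2 ⟨fun c hc => mem_of_superset hIco fun x hx => hc.trans (hpos x hx),
    fun c hc => ?_⟩
  have hcost : Tendsto (fun u => a * (c / 2) * (β - u) + (F u - F β)) (𝓝 β) (𝓝 0) := by
    have h : Continuous fun u => a * (c / 2) * (β - u) + (F u - F β) := by fun_prop
    simpa using h.tendsto β
  obtain ⟨r, hr, hsmall⟩ :=
    Metric.eventually_nhds_iff.1 (hcost.eventually (gt_mem_nhds (half_pos hc)))
  filter_upwards [hIco, Ioo_mem_nhdsLT (show β - r < β by linarith)] with x hx hxr
  by_contra! hcx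
  obtain ⟨ε, hYx, hε⟩ := (((hlim x hx.1).eventually
    (lt_mem_nhds (show c / 2 < Ylim x by linarith))).and self_mem_nhdsWithin).exists
  obtain ⟨u, hu, hdesc⟩ := hY.exists_sub_le_of_descent hk ha hε hx.1 hx.2.le hYx.le
  have hur : dist u β < r := by
    rw [Real.dist_eq, abs_of_nonpos (by linarith [hu.2])]
    linarith [hu.1, hxr.1]
  linarith [hsmall hur, hβY ε hε]

theorem apply_le_of_forall_le (hY : IsApproxFamily_s15 Y₀ k a F Y) (hk : 0 ≤ k) (ha : 0 ≤ a)
    (hε : 0 < ε) {δ t : ℝ} (hδ : 0 < δ) (ht : 0 ≤ t) (hlow : ∀ s ∈ Icc 0 t, δ ≤ Y ε s) :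
    Y ε t ≤ Y₀ + t * (k / δ) + F t := by
  have hc := hY.continuous ε hε
  have hdrift : ∫ s in 0..t, penalizedDrift k ε (Y ε s) ≤ ∫ _ in 0..t, k / δ :=
    intervalIntegral.integral_mono_on ht ((hc.penalizedDrift hε).intervalIntegrable _ _)
      intervalIntegrable_const fun s hs => penalizedDrift_le hk hδ hε.le (hlow s hs)
  have hint : 0 ≤ ∫ s in 0..t, Y ε s :=
    intervalIntegral.integral_nonneg ht fun s hs => hδ.le.trans (hlow s hs)
  rw [intervalIntegral.integral_const, smul_eq_mul, sub_zero] at hdrift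
  linarith [hY.eq ε hε t ht, mul_nonneg ha hint]

theorem exists_bounds (hY : IsApproxFamily_s15 Y₀ k a F Y) (hk : 0 ≤ k) (ha : 0 ≤ a)
    (hlim : ∀ t, 0 ≤ t → Tendsto (fun ε => Y ε t) (𝓝[>] 0) (𝓝 (Ylim t))) {T : ℝ}
    (hpos : ∀ s ∈ Icc 0 T, 0 < Ylim s) :
    ∃ δ > 0, ∀ ε ∈ Ioc 0 δ, ∀ s ∈ Icc 0 T, δ < Y ε s ∧ Y ε s ≤ Y₀ + T * (k / δ) + |F s| := by
  obtain ⟨δ, hδ, hlow⟩ := isCompact_Icc.exists_forall_lt_of_antitone_tendsto hY.continuous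
    (fun _ _ h₁ h₁₂ x hx => hY.apply_le_apply_of_le hk ha h₁ h₁₂ hx.1) (fun x hx => hlim x hx.1)
    hpos
  refine ⟨δ, hδ, fun ε hε s hs => ⟨hlow ε hε s hs, ?_⟩⟩
  have hup := hY.apply_le_of_forall_le hk ha hε.1 hδ hs.1 fun x hx =>
    (hlow ε hε x ⟨hx.1, hx.2.trans hs.2⟩).le
  have hsT : s * (k / δ) ≤ T * (k / δ) := by gcongr; exact hs.2
  linarith [le_abs_self (F s)]

theorem exists_lim_bounds (hY : IsApproxFamily_s15 Y₀ k a F Y) (hk : 0 ≤ k) (ha : 0 ≤ a)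
    (hlim : ∀ t, 0 ≤ t → Tendsto (fun ε => Y ε t) (𝓝[>] 0) (𝓝 (Ylim t))) {T : ℝ}
    (hpos : ∀ s ∈ Icc 0 T, 0 < Ylim s) :
    ∃ δ > 0, ∀ s ∈ Icc 0 T, δ ≤ Ylim s ∧ Ylim s ≤ Y₀ + T * (k / δ) + |F s| := by
  obtain ⟨δ, hδ, hb⟩ := hY.exists_bounds hk ha hlim hpos
  refine ⟨δ, hδ, fun s hs => ⟨?_, ?_⟩⟩
  · exact (hb δ ⟨hδ, le_rfl⟩ s hs).1.le.trans (hY.apply_le_lim hk ha hlim hδ hs.1)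
  · exact le_of_tendsto (hlim s hs.1) <| mem_of_superset (Ioc_mem_nhdsGT hδ) fun ε hε =>
      (hb ε hε s hs).2

theorem aestronglyMeasurable_lim (hY : IsApproxFamily_s15 Y₀ k a F Y)
    (hlim : ∀ t, 0 ≤ t → Tendsto (fun ε => Y ε t) (𝓝[>] 0) (𝓝 (Ylim t))) {s : Set ℝ}
    (hs : s ⊆ Ici 0) : AEStronglyMeasurable Ylim (volume.restrict s) :=
  AEStronglyMeasurable.mono_set hs <|
    aestronglyMeasurable_of_tendsto_ae atTop (f := fun n : ℕ => Y ((n : ℝ) + 1)⁻¹)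
    (fun _ => (hY.continuous _ (by positivity)).aestronglyMeasurable)
    ((ae_restrict_iff' measurableSet_Ici).2 (Eventually.of_forall fun t ht =>
      (hlim t ht).comp tendsto_inv_natCast_succ_nhdsGT_zero))

theorem intervalIntegrable_lim_s15 (hY : IsApproxFamily_s15 Y₀ k a F Y) (hk : 0 ≤ k) (ha : 0 ≤ a)
    (hF : Continuous F) (hlim : ∀ t, 0 ≤ t → Tendsto (fun ε => Y ε t) (𝓝[>] 0) (𝓝 (Ylim t)))
    {T : ℝ} (hT : 0 ≤ T) (hpos : ∀ s ∈ Icc 0 T, 0 < Ylim s) :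
    IntervalIntegrable Ylim volume 0 T ∧ IntervalIntegrable (fun s => k / Ylim s) volume 0 T := by
  obtain ⟨δ, hδ, hb⟩ := hY.exists_lim_bounds hk ha hlim hpos
  have hm := hY.aestronglyMeasurable_lim hlim (s := Ioc 0 T) fun x hx => hx.1.le
  have hbound : Continuous fun s => Y₀ + T * (k / δ) + |F s| := by fun_prop
  refine ⟨intervalIntegrable_of_abs_le hT (hbound.intervalIntegrable _ _) hm fun x hx => ?_,
    intervalIntegrable_of_abs_le (g := fun _ => k / δ) hT intervalIntegrable_const
      (aemeasurable_const.div hm.aemeasurable).aestronglyMeasurable fun x hx => ?_⟩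
  · obtain ⟨hδx, hx⟩ := hb x (Ioc_subset_Icc_self hx)
    rwa [abs_of_pos (hδ.trans_le hδx)]
  · have hδx := (hb x (Ioc_subset_Icc_self hx)).1
    rw [abs_of_nonneg (div_nonneg hk (hδ.le.trans hδx))]
    exact div_le_div_of_nonneg_left hk hδ hδx

theorem lim_eq (hY : IsApproxFamily_s15 Y₀ k a F Y) (hk : 0 ≤ k) (ha : 0 ≤ a) (hF : Continuous F)
    (hlim : ∀ t, 0 ≤ t → Tendsto (fun ε => Y ε t) (𝓝[>] 0) (𝓝 (Ylim t))) {T : ℝ}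
    (hpos : ∀ s ∈ Icc 0 T, 0 < Ylim s) {t : ℝ} (ht : t ∈ Icc 0 T) :
    Ylim t = Y₀ + (∫ s in 0..t, k / Ylim s) - a * (∫ s in 0..t, Ylim s) + F t := by
  obtain ⟨δ, hδ, hb⟩ := hY.exists_bounds hk ha hlim hpos
  have hsub : uIoc 0 t ⊆ Icc 0 T := by
    rw [uIoc_of_le ht.1]
    exact fun x hx => ⟨hx.1.le, hx.2.trans ht.2⟩
  have hdrift : Tendsto (fun ε => ∫ s in 0..t, penalizedDrift k ε (Y ε s)) (𝓝[>] 0)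
      (𝓝 (∫ s in 0..t, k / Ylim s)) :=
    intervalIntegral.tendsto_integral_filter_of_dominated_convergence (fun _ => k / δ)
      (eventually_mem_nhdsWithin.mono fun ε hε =>
        ((hY.continuous ε hε).penalizedDrift hε).aestronglyMeasurable)
      (mem_of_superset (Ioc_mem_nhdsGT hδ) fun ε hε => ae_of_all _ fun x hx => by
        rw [Real.norm_of_nonneg (penalizedDrift_nonneg hk hε.1.le)]
        exact penalizedDrift_le hk hδ hε.1.le (hb ε hε x (hsub hx)).1.le)
      intervalIntegrable_const
      (ae_of_all _ fun x hx => tendsto_penalizedDrift (hlim x (hsub hx).1) (hpos x (hsub hx)))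
  have hbound : Continuous fun s => Y₀ + T * (k / δ) + |F s| := by fun_prop
  have hint : Tendsto (fun ε => ∫ s in 0..t, Y ε s) (𝓝[>] 0) (𝓝 (∫ s in 0..t, Ylim s)) :=
    intervalIntegral.tendsto_integral_filter_of_dominated_convergence _
      (eventually_mem_nhdsWithin.mono fun ε hε => (hY.continuous ε hε).aestronglyMeasurable)
      (mem_of_superset (Ioc_mem_nhdsGT hδ) fun ε hε => ae_of_all _ fun x hx => by
        obtain ⟨hδY, hYle⟩ := hb ε hε x (hsub hx)
        rwa [Real.norm_of_nonneg (hδ.trans hδY).le])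
      (hbound.intervalIntegrable 0 t) (ae_of_all _ fun x hx => hlim x (hsub hx).1)
  refine tendsto_nhds_unique (hlim t ht.1) <|
    (((tendsto_const_nhds.add hdrift).sub (hint.const_mul a)).add tendsto_const_nhds).congr' ?_
  filter_upwards [self_mem_nhdsWithin] with ε hε using (hY.eq ε hε t ht.1).symm

theorem lim_eq_of_tendsto_nhdsLT (hY : IsApproxFamily_s15 Y₀ k a F Y) (hk : 0 ≤ k) (ha : 0 ≤ a)
    (hF : Continuous F) (hlim : ∀ t, 0 ≤ t → Tendsto (fun ε => Y ε t) (𝓝[>] 0) (𝓝 (Ylim t)))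
    {β : ℝ} (hβ : 0 < β) (hpos : ∀ s ∈ Ico 0 β, 0 < Ylim s)
    (htend : Tendsto Ylim (𝓝[<] β) (𝓝 0)) (hzero : Ylim β = 0) :
    Ylim β = Y₀ + (∫ s in 0..β, k / Ylim s) - a * (∫ s in 0..β, Ylim s) + F β := by
  have hposT : ∀ T ∈ Ico 0 β, ∀ s ∈ Icc 0 T, 0 < Ylim s := fun T hT s hs =>
    hpos s ⟨hs.1, hs.2.trans_lt hT.2⟩
  obtain ⟨T, hT, hsmall⟩ : ∃ T ∈ Ico 0 β, ∀ x ∈ Ioo T β, Ylim x < 1 := by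
    obtain ⟨T, hT, hsub⟩ :=
      mem_nhdsLT_iff_exists_Ioo_subset.1 (htend.eventually (gt_mem_nhds one_pos))
    exact ⟨max T 0, ⟨le_max_right _ _, max_lt hT hβ⟩, fun x hx =>
      hsub ⟨(le_max_left _ _).trans_lt hx.1, hx.2⟩⟩
  have hYi : IntervalIntegrable Ylim volume 0 β := by
    refine (hY.intervalIntegrable_lim_s15 hk ha hF hlim hT.1 (hposT T hT)).1.trans
      (intervalIntegrable_of_abs_le (g := fun _ => 1) hT.2.le intervalIntegrable_const
        (hY.aestronglyMeasurable_lim hlim fun x hx => hT.1.trans hx.1.le) fun x hx => ?_)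
    rcases hx.2.lt_or_eq with hxβ | rfl
    · rw [abs_of_pos (hpos x ⟨hT.1.trans hx.1.le, hxβ⟩)]
      exact (hsmall x ⟨hx.1, hxβ⟩).le
    · simp [hzero]
  have hrest : Tendsto (fun t => Ylim t - Y₀ + a * (∫ s in 0..t, Ylim s) - F t) (𝓝[<] β)
      (𝓝 (0 - Y₀ + a * (∫ s in 0..β, Ylim s) - F β)) :=
    ((htend.sub_const _).add ((hYi.tendsto_integral_nhdsLT hβ).const_mul a)).sub
      (hF.continuousAt.tendsto.mono_left nhdsWithin_le_nhds)
  have hdrift := intervalIntegral_eq_of_tendsto_nhdsLT hβ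
    (fun x hx => div_nonneg hk (hpos x ⟨hx.1.le, hx.2⟩).le)
    (fun t ht => (hY.intervalIntegrable_lim_s15 hk ha hF hlim ht.1 (hposT t ht)).2)
    (hrest.congr' <| eventually_of_mem (Ico_mem_nhdsLT hβ) fun t ht => by
      linarith [hY.lim_eq hk ha hF hlim (hposT t ht) ⟨ht.1, le_rfl⟩])
  rw [hdrift, hzero]
  ring

end IsApproxFamily_s15

theorem limit_process_equation_until_first_zero_general
    (Y₀ k a σ : ℝ) (hY₀ : 0 < Y₀) (hk : 0 < k) (ha : 0 < a)
    (g : ℝ → ℝ) (hg : Continuous g) (hg0 : g 0 = 0)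
    (Y : ℝ → ℝ → ℝ) (Ylim : ℝ → ℝ)
    (hYc : ∀ ε : ℝ, 0 < ε → Continuous (Y ε))
    (hYeq : ∀ ε : ℝ, 0 < ε → ∀ t : ℝ, 0 ≤ t →
      Y ε t = Y₀ + (∫ s in (0:ℝ)..t, k / ((if 0 < Y ε s then Y ε s else 0) + ε))
        - a * (∫ s in (0:ℝ)..t, Y ε s) + σ * g t)
    (hlim : ∀ t : ℝ, 0 ≤ t →
      Tendsto (fun ε => Y ε t) (𝓝[>] 0) (𝓝 (Ylim t)))
    (β₀ : ℝ) (hβ₀pos : 0 < β₀)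
    (hβ₀ : IsLUB {t : ℝ | 0 < t ∧ ∀ s ∈ Set.Ico (0:ℝ) t, 0 < Ylim s} β₀) :
    Tendsto Ylim (𝓝[<] β₀) (𝓝 0) ∧ Ylim β₀ = 0 ∧
    ∀ t ∈ Set.Icc (0:ℝ) β₀,
      Ylim t = Y₀ + (∫ s in (0:ℝ)..t, k / Ylim s) - a * (∫ s in (0:ℝ)..t, Ylim s)
        + σ * g t := by
  have hdrift : ∀ ε x : ℝ, k / ((if 0 < x then x else 0) + ε) = penalizedDrift k ε x := by
    intro ε x
    split_ifs with hx
    · rw [penalizedDrift, max_eq_left hx.le]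
    · rw [penalizedDrift, max_eq_right (not_lt.1 hx)]
  simp only [hdrift] at hYeq
  have hY : IsApproxFamily_s15 Y₀ k a (fun t => σ * g t) Y := ⟨hYc, hYeq⟩
  have hF : Continuous fun t => σ * g t := continuous_const.mul hg
  have hpos : ∀ s ∈ Ico 0 β₀, 0 < Ylim s := fun s hs => pos_of_isLUB_firstZero hβ₀ hs
  have hβY : ∀ ε, 0 < ε → Y ε β₀ ≤ 0 := fun ε hε =>
    hY.apply_nonpos_of_exists_lim_nonpos hk.le ha.le hlim hε hβ₀pos.le fun _ hr =>
      exists_nonpos_of_isLUB_firstZero hβ₀pos.le hβ₀ hr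
  have hzero : Ylim β₀ = 0 := le_antisymm
    (le_of_tendsto (hlim β₀ hβ₀pos.le) (eventually_nhdsWithin_of_forall hβY))
    (hY.lim_nonneg hY₀.le hk ha.le hF (by simp [hg0]) hlim hβ₀pos.le)
  have htend := hY.tendsto_lim_nhdsLT hk.le ha.le hF hlim hβ₀pos hpos hβY
  refine ⟨htend, hzero, fun t ht => ?_⟩
  rcases ht.2.lt_or_eq with hlt | rfl
  · exact hY.lim_eq hk.le ha.le hF hlim (fun s hs => hpos s ⟨hs.1, hs.2.trans_lt hlt⟩)
      ⟨ht.1, le_rfl⟩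
  · exact hY.lim_eq_of_tendsto_nhdsLT hk.le ha.le hF hlim hβ₀pos hpos htend hzero

/-- Remarks 4 and 5: up to the first zero β₀ of the limit process Y, Y tends
to 0 at β₀, Y(β₀) = 0, and Y satisfies the square-root integral equation. -/
theorem limit_process_equation_until_first_zero
    (Y₀ k a σ : ℝ) (hY₀ : 0 < Y₀) (hk : 0 < k) (ha : 0 < a) (hσ : 0 < σ)
    (g : ℝ → ℝ) (hg : Continuous g) (hg0 : g 0 = 0)
    (Y : ℝ → ℝ → ℝ) (Ylim : ℝ → ℝ)
    (hYc : ∀ ε : ℝ, 0 < ε → Continuous (Y ε))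
    (hYeq : ∀ ε : ℝ, 0 < ε → ∀ t : ℝ, 0 ≤ t →
      Y ε t = Y₀ + (∫ s in (0:ℝ)..t, k / ((if 0 < Y ε s then Y ε s else 0) + ε))
        - a * (∫ s in (0:ℝ)..t, Y ε s) + σ * g t)
    (hlim : ∀ t : ℝ, 0 ≤ t →
      Tendsto (fun ε => Y ε t) (𝓝[>] 0) (𝓝 (Ylim t)))
    (β₀ : ℝ) (hβ₀pos : 0 < β₀)
    (hβ₀ : IsLUB {t : ℝ | 0 < t ∧ ∀ s ∈ Set.Ico (0:ℝ) t, 0 < Ylim s} β₀) :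
    Tendsto Ylim (𝓝[<] β₀) (𝓝 0) ∧ Ylim β₀ = 0 ∧
    ∀ t ∈ Set.Icc (0:ℝ) β₀,
      Ylim t = Y₀ + (∫ s in (0:ℝ)..t, k / Ylim s) - a * (∫ s in (0:ℝ)..t, Ylim s)
        + σ * g t :=
  limit_process_equation_until_first_zero_general Y₀ k a σ hY₀ hk ha g hg hg0 Y Ylim hYc hYeq hlim
    β₀ hβ₀pos hβ₀
end

section
/- Let $\tilde Y_\varepsilon$ and $Y_\varepsilon$ be continuous solutions (for the same fixed continuous path $g$ and same $Y_0,k,a,\sigma>0$) of $\tilde Y_\varepsilon(t) = Y_0 + \int_0^t \frac{k}{\max\{\tilde Y_\varepsilon(s),\varepsilon\}}\,ds - a\int_0^t \tilde Y_\varepsilon(s)\,ds + \sigma g(t)$ and $Y_\varepsilon(t) = Y_0 + \int_0^t \frac{k}{Y_\varepsilon(s)\mathbf{1}_{\{Y_\varepsilon(s)>0\}}+\varepsilon}\,ds - a\int_0^t Y_\varepsilon(s)\,ds + \sigma g(t)$. Then $0 \le \tilde Y_\varepsilon(t) - Y_\varepsilon(t) < 2\varepsilon$ for all $t\ge 0$;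 consequently the limits $\tilde Y = \lim_{\varepsilon\to0}\tilde Y_\varepsilon$ and $Y = \lim_{\varepsilon\to0}Y_\varepsilon$ coincide on $[0,\infty)$. -/
/-!
The noise `σ g` cancels in `Δ = Ỹ_ε - Y_ε`, so `Δ` is the primitive of `b̃_ε(Ỹ_ε) - b_ε(Y_ε)`,
where `b̃_ε x = k / max x ε - a x` and `b_ε x = k / (x⁺ + ε) - a x`, and `Δ 0 = 0`.
Since `max x ε ≤ x⁺ + ε` and `x ↦ k / max x ε` is antitone, this integrand is positive while
`Δ < 0`; since `max (x + ε) ε = x⁺ + ε`, it is negative while `Δ > ε`. Hence `Δ` never leaves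
`[0, ε]`, and letting `ε → 0` squeezes the two limits together.
-/

open Filter Topology MeasureTheory Set

noncomputable def maxDrift (k a ε x : ℝ) : ℝ := k / max x ε - a * x

noncomputable def posPartDrift (k a ε x : ℝ) : ℝ := k / (max x 0 + ε) - a * x

section Drift

variable {k a ε : ℝ}

theorem continuous_maxDrift (hε : 0 < ε) : Continuous (maxDrift k a ε) :=
  (continuous_const.div (continuous_id.max continuous_const) fun _ =>
    (lt_max_of_lt_right hε).ne').sub (continuous_const.mul continuous_id)

theorem continuous_posPartDrift (hε : 0 < ε) : Continuous (posPartDrift k a ε) :=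
  (continuous_const.div ((continuous_id.max continuous_const).add continuous_const) fun _ =>
    (add_pos_of_nonneg_of_pos (le_max_right _ _) hε).ne').sub (continuous_const.mul continuous_id)

theorem posPartDrift_lt_maxDrift (hk : 0 ≤ k) (ha : 0 < a) (hε : 0 < ε) {x y : ℝ} (hxy : x < y) :
    posPartDrift k a ε y < maxDrift k a ε x := by
  have hden : k / (max y 0 + ε) ≤ k / max x ε :=
    div_le_div_of_nonneg_left hk (lt_max_of_lt_right hε)
      (max_le (by linarith [le_max_left y 0]) (by linarith [le_max_right y 0]))
  have hlin : a * x < a * y := mul_lt_mul_of_pos_left hxy ha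
  unfold posPartDrift maxDrift
  linarith

theorem maxDrift_lt_posPartDrift (hk : 0 ≤ k) (ha : 0 < a) (hε : 0 < ε) {x y : ℝ}
    (hxy : y + ε < x) : maxDrift k a ε x < posPartDrift k a ε y := by
  have hden : k / max x ε ≤ k / (max y 0 + ε) :=
    calc k / max x ε ≤ k / max (y + ε) ε :=
          div_le_div_of_nonneg_left hk (lt_max_of_lt_right hε) (max_le_max_right ε hxy.le)
      _ = k / (max y 0 + ε) := by rw [← max_add_add_right, zero_add]
  have hlin : a * y < a * x := mul_lt_mul_of_pos_left (by linarith) ha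
  unfold posPartDrift maxDrift
  linarith

theorem integral_maxDrift (hε : 0 < ε) {X : ℝ → ℝ} (hX : Continuous X) (t : ℝ) :
    ∫ s in (0:ℝ)..t, maxDrift k a ε (X s) =
      (∫ s in (0:ℝ)..t, k / max (X s) ε) - a * ∫ s in (0:ℝ)..t, X s := by
  have hden : Continuous fun s => k / max (X s) ε :=
    continuous_const.div (hX.max continuous_const) fun _ => (lt_max_of_lt_right hε).ne'
  rw [← intervalIntegral.integral_const_mul]
  exact intervalIntegral.integral_sub (hden.intervalIntegrable _ _)
    ((continuous_const.mul hX).intervalIntegrable _ _)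

theorem integral_posPartDrift (hε : 0 < ε) {Z : ℝ → ℝ} (hZ : Continuous Z) (t : ℝ) :
    ∫ s in (0:ℝ)..t, posPartDrift k a ε (Z s) =
      (∫ s in (0:ℝ)..t, k / ((if 0 < Z s then Z s else 0) + ε)) - a * ∫ s in (0:ℝ)..t, Z s := by
  have hite : ∀ s, (if 0 < Z s then Z s else 0) = max (Z s) 0 := fun s => by
    rw [max_comm, max_def_lt]
  have hden : Continuous fun s => k / (max (Z s) 0 + ε) :=
    continuous_const.div ((hZ.max continuous_const).add continuous_const) fun _ =>
      (add_pos_of_nonneg_of_pos (le_max_right _ _) hε).ne'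
  simp only [hite]
  rw [← intervalIntegral.integral_const_mul]
  exact intervalIntegral.integral_sub (hden.intervalIntegrable _ _)
    ((continuous_const.mul hZ).intervalIntegrable _ _)

end Drift

theorem le_of_eq_integral_of_neg {D F : ℝ → ℝ} {c : ℝ} (hF : Continuous F)
    (hD : ∀ t, 0 ≤ t → D t = ∫ s in (0:ℝ)..t, F s) (hc : 0 ≤ c)
    (hneg : ∀ x, 0 ≤ x → c < D x → F x < 0) {t : ℝ} (ht : 0 ≤ t) : D t ≤ c := by
  set P : ℝ → ℝ := fun u => ∫ s in (0:ℝ)..u, F s with hPdef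
  have hP : ∀ x, HasDerivAt P (F x) x := fun x => (hF.integral_hasStrictDerivAt 0 x).hasDerivAt
  rw [hD t ht]
  -- `hneg` gives nothing on the level `c` itself, so fence with the level `c + δ` instead.
  refine le_of_forall_pos_le_add fun δ hδ => ?_
  refine image_le_of_deriv_right_lt_deriv_boundary (f := P) (B := fun _ => c + δ) (B' := 0)
    (fun x _ => (hP x).continuousAt.continuousWithinAt) (fun x _ => (hP x).hasDerivWithinAt)
    (by simp [hPdef]; linarith) (fun x => hasDerivAt_const x _) ?_ ⟨ht, le_rfl⟩
  intro x hx hPx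
  exact hneg x hx.1 (by rw [hD x hx.1]; linarith [hPx])

theorem le_of_eq_integral_of_pos {D F : ℝ → ℝ} {c : ℝ} (hF : Continuous F)
    (hD : ∀ t, 0 ≤ t → D t = ∫ s in (0:ℝ)..t, F s) (hc : c ≤ 0)
    (hpos : ∀ x, 0 ≤ x → D x < c → 0 < F x) {t : ℝ} (ht : 0 ≤ t) : c ≤ D t := by
  have h := le_of_eq_integral_of_neg (D := -D) (F := -F) (c := -c) hF.neg
    (fun t ht => by simp [hD t ht, intervalIntegral.integral_neg]) (neg_nonneg.2 hc)
    (fun x hx hcx => by simpa using hpos x hx (by simpa using hcx)) ht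
  simpa using h

theorem sub_eq_integral_maxDrift_sub_posPartDrift {Y₀ k a σ ε : ℝ} {g X Z : ℝ → ℝ} (hε : 0 < ε)
    (hX : Continuous X) (hZ : Continuous Z)
    (hXeq : ∀ t : ℝ, 0 ≤ t →
      X t = Y₀ + (∫ s in (0:ℝ)..t, k / max (X s) ε) - a * (∫ s in (0:ℝ)..t, X s) + σ * g t)
    (hZeq : ∀ t : ℝ, 0 ≤ t →
      Z t = Y₀ + (∫ s in (0:ℝ)..t, k / ((if 0 < Z s then Z s else 0) + ε))
        - a * (∫ s in (0:ℝ)..t, Z s) + σ * g t)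
    {t : ℝ} (ht : 0 ≤ t) :
    X t - Z t = ∫ s in (0:ℝ)..t, (maxDrift k a ε (X s) - posPartDrift k a ε (Z s)) := by
  have hXdrift : Continuous fun s => maxDrift k a ε (X s) := (continuous_maxDrift hε).comp hX
  have hZdrift : Continuous fun s => posPartDrift k a ε (Z s) :=
    (continuous_posPartDrift hε).comp hZ
  rw [intervalIntegral.integral_sub (hXdrift.intervalIntegrable _ _)
      (hZdrift.intervalIntegrable _ _), integral_maxDrift hε hX, integral_posPartDrift hε hZ, hXeq t ht, hZeq t ht]
  ring

theorem regularizations_coincide_general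
    (Y₀ k a σ : ℝ) (hk : 0 < k) (ha : 0 < a)
    (g : ℝ → ℝ)
    (Y Yt : ℝ → ℝ → ℝ) (Ylim Ytlim : ℝ → ℝ)
    (hYc : ∀ ε : ℝ, 0 < ε → Continuous (Y ε))
    (hYtc : ∀ ε : ℝ, 0 < ε → Continuous (Yt ε))
    (hYeq : ∀ ε : ℝ, 0 < ε → ∀ t : ℝ, 0 ≤ t →
      Y ε t = Y₀ + (∫ s in (0:ℝ)..t, k / ((if 0 < Y ε s then Y ε s else 0) + ε))
        - a * (∫ s in (0:ℝ)..t, Y ε s) + σ * g t)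
    (hYteq : ∀ ε : ℝ, 0 < ε → ∀ t : ℝ, 0 ≤ t →
      Yt ε t = Y₀ + (∫ s in (0:ℝ)..t, k / max (Yt ε s) ε)
        - a * (∫ s in (0:ℝ)..t, Yt ε s) + σ * g t)
    (hlim : ∀ t : ℝ, 0 ≤ t →
      Tendsto (fun ε => Y ε t) (𝓝[>] 0) (𝓝 (Ylim t)))
    (htlim : ∀ t : ℝ, 0 ≤ t →
      Tendsto (fun ε => Yt ε t) (𝓝[>] 0) (𝓝 (Ytlim t))) :
    (∀ ε : ℝ, 0 < ε → ∀ t : ℝ, 0 ≤ t →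
      0 ≤ Yt ε t - Y ε t ∧ Yt ε t - Y ε t < 2 * ε) ∧
    ∀ t : ℝ, 0 ≤ t → Ytlim t = Ylim t := by
  have hgap : ∀ ε, 0 < ε → ∀ t, 0 ≤ t → 0 ≤ Yt ε t - Y ε t ∧ Yt ε t - Y ε t ≤ ε := by
    intro ε hε t ht
    have hF : Continuous fun s => maxDrift k a ε (Yt ε s) - posPartDrift k a ε (Y ε s) :=
      ((continuous_maxDrift hε).comp (hYtc ε hε)).sub
        ((continuous_posPartDrift hε).comp (hYc ε hε))
    have hrep := fun t (ht : 0 ≤ t) => sub_eq_integral_maxDrift_sub_posPartDrift hε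
      (hYtc ε hε) (hYc ε hε) (hYteq ε hε) (hYeq ε hε) ht
    exact ⟨le_of_eq_integral_of_pos hF hrep le_rfl (fun x _ hx =>
        sub_pos.2 (posPartDrift_lt_maxDrift hk.le ha hε (sub_neg.1 hx))) ht,
      le_of_eq_integral_of_neg hF hrep hε.le (fun x _ hx =>
        sub_neg.2 (maxDrift_lt_posPartDrift hk.le ha hε (by linarith))) ht⟩
  refine ⟨fun ε hε t ht => ⟨(hgap ε hε t ht).1, (hgap ε hε t ht).2.trans_lt (by linarith)⟩,
    fun t ht => ?_⟩
  have hgap_tendsto : Tendsto (fun ε => Yt ε t - Y ε t) (𝓝[>] 0) (𝓝 0) :=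
    tendsto_of_tendsto_of_tendsto_of_le_of_le' tendsto_const_nhds
      (tendsto_id.mono_left nhdsWithin_le_nhds)
      (eventually_nhdsWithin_of_forall fun ε hε => (hgap ε hε t ht).1)
      (eventually_nhdsWithin_of_forall fun ε hε => (hgap ε hε t ht).2)
  exact sub_eq_zero.1 (tendsto_nhds_unique ((htlim t ht).sub (hlim t ht)) hgap_tendsto)

/-- Remark 6: the two ε-regularizations differ by at most 2ε pathwise, so the
limit square root processes coincide. -/
theorem regularizations_coincide
    (Y₀ k a σ : ℝ) (hY₀ : 0 < Y₀) (hk : 0 < k) (ha : 0 < a) (hσ : 0 < σ)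
    (g : ℝ → ℝ) (hg : Continuous g) (hg0 : g 0 = 0)
    (Y Yt : ℝ → ℝ → ℝ) (Ylim Ytlim : ℝ → ℝ)
    (hYc : ∀ ε : ℝ, 0 < ε → Continuous (Y ε))
    (hYtc : ∀ ε : ℝ, 0 < ε → Continuous (Yt ε))
    (hYeq : ∀ ε : ℝ, 0 < ε → ∀ t : ℝ, 0 ≤ t →
      Y ε t = Y₀ + (∫ s in (0:ℝ)..t, k / ((if 0 < Y ε s then Y ε s else 0) + ε))
        - a * (∫ s in (0:ℝ)..t, Y ε s) + σ * g t)
    (hYteq : ∀ ε : ℝ, 0 < ε → ∀ t : ℝ, 0 ≤ t →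
      Yt ε t = Y₀ + (∫ s in (0:ℝ)..t, k / max (Yt ε s) ε)
        - a * (∫ s in (0:ℝ)..t, Yt ε s) + σ * g t)
    (hlim : ∀ t : ℝ, 0 ≤ t →
      Tendsto (fun ε => Y ε t) (𝓝[>] 0) (𝓝 (Ylim t)))
    (htlim : ∀ t : ℝ, 0 ≤ t →
      Tendsto (fun ε => Yt ε t) (𝓝[>] 0) (𝓝 (Ytlim t))) :
    (∀ ε : ℝ, 0 < ε → ∀ t : ℝ, 0 ≤ t →
      0 ≤ Yt ε t - Y ε t ∧ Yt ε t - Y ε t < 2 * ε) ∧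
    ∀ t : ℝ, 0 ≤ t → Ytlim t = Ylim t :=
  regularizations_coincide_general Y₀ k a σ hk ha g Y Yt Ylim Ytlim hYc hYtc hYeq hYteq hlim htlim
end
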